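/- arXiv:2410.07937 — 7 statements merged into one kernel-verified Lean document; each statement's English description precedes it below -/
import Mathlib

section
/- Let V be a finite-dimensional vector space over F_q, K ≤ V of dimension k+1, and let B be a set of subspaces of V containing K, each of dimension (t+1)+(k+1). Then the number of (t+1)-dimensional subspaces T of V with K ∩ T = {0} and K + T ∈ B equals q^{(t+1)(k+1)} · |B|. -/
open Module Submodule

section aux

variable (F : Type*) [Field F] [Fintype F]

/-- The projections onto `p` are in bijection with `Hom(W/p, p)`. -/
noncomputable def projEquiv {W : Type*} [AddCommGroup W] [Module F W]
    (p : Submodule F W) (f₀ : W →ₗ[F] p) (hf₀ : ∀ x : p, f₀ x = x) :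
    {f : W →ₗ[F] p // ∀ x : p, f x = x} ≃ ((W ⧸ p) →ₗ[F] p) where
  toFun f := p.liftQ (f.1 - f₀) (by
    intro x hx
    simp [f.2 ⟨x, hx⟩, hf₀ ⟨x, hx⟩])
  invFun g := ⟨f₀ + g ∘ₗ p.mkQ, by
    intro x
    have : p.mkQ (x : W) = 0 := by
      simp [Submodule.mkQ_apply, (Submodule.Quotient.mk_eq_zero p).2 x.2]
    simp [this, hf₀ x]⟩
  left_inv f := by
    ext x
    simp [Submodule.mkQ_apply]
  right_inv g := by
    apply p.linearMap_qext
    ext x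
    simp [Submodule.mkQ_apply]

lemma count_compl {W : Type*} [AddCommGroup W] [Module F W] [FiniteDimensional F W]
    (p : Submodule F W) :
    Nat.card {q : Submodule F W // IsCompl p q} =
      Fintype.card F ^ ((finrank F W - finrank F p) * finrank F p) := by
  classical
  obtain ⟨q₀, hq₀⟩ := Submodule.exists_isCompl p
  have hf₀ : ∀ x : p, p.linearProjOfIsCompl q₀ hq₀ x = x := fun x =>
    Submodule.linearProjOfIsCompl_apply_left hq₀ x
  have e := (p.isComplEquivProj).trans (projEquiv F p _ hf₀)
  rw [Nat.card_congr e]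
  haveI : Finite W := Module.finite_of_finite F
  haveI : Finite (W ⧸ p) := Finite.of_surjective _ (Submodule.mkQ_surjective p)
  haveI : Finite ((W ⧸ p) →ₗ[F] p) := Finite.of_injective _ DFunLike.coe_injective
  haveI : Fintype ((W ⧸ p) →ₗ[F] p) := Fintype.ofFinite _
  rw [Nat.card_eq_fintype_card, card_eq_pow_finrank (K := F) (V := ((W ⧸ p) →ₗ[F] p)),
    Module.finrank_linearMap]
  congr 2
  have := p.finrank_quotient_add_finrank
  omega

end aux

theorem stmt4 (F V : Type*) [Field F] [Fintype F] [AddCommGroup V] [Module F V]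
    [FiniteDimensional F V] (q k t : ℕ) (hq : Fintype.card F = q)
    (K : Submodule F V) (hK : Module.finrank F K = k + 1)
    (B : Finset (Submodule F V))
    (hB : ∀ W ∈ B, K ≤ W ∧ Module.finrank F W = (t + 1) + (k + 1)) :
    Nat.card {T : Submodule F V //
        Module.finrank F T = t + 1 ∧ K ⊓ T = ⊥ ∧ K ⊔ T ∈ B} =
      q ^ ((t + 1) * (k + 1)) * B.card := by
  classical
  haveI : Finite V := Module.finite_of_finite F
  haveI : Finite (Submodule F V) := Finite.of_injective _ SetLike.coe_injective
  -- fiber over W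
  set S := {T : Submodule F V //
      Module.finrank F T = t + 1 ∧ K ⊓ T = ⊥ ∧ K ⊔ T ∈ B} with hS
  let φ : S → {W : Submodule F V // W ∈ B} := fun T => ⟨K ⊔ T.1, T.2.2.2⟩
  have e1 : (Σ W : {W // W ∈ B}, {T : S // φ T = W}) ≃ S := Equiv.sigmaFiberEquiv φ
  haveI : Fintype {W : Submodule F V // W ∈ B} := Fintype.ofFinite _
  haveI : ∀ W : {W // W ∈ B}, Fintype {T : S // φ T = W} := fun W => Fintype.ofFinite _
  haveI : Fintype S := Fintype.ofFinite _
  rw [← Nat.card_congr e1, Nat.card_eq_fintype_card, Fintype.card_sigma]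
  have key : ∀ W : {W // W ∈ B}, Fintype.card {T : S // φ T = W} = q ^ ((t + 1) * (k + 1)) := by
    intro W
    obtain ⟨hKW, hW⟩ := hB W.1 W.2
    -- flatten
    have e2 : {T : S // φ T = W} ≃
        {T : Submodule F V // K ⊓ T = ⊥ ∧ K ⊔ T = W.1} := by
      refine ⟨fun T => ⟨T.1.1, T.1.2.2.1, ?_⟩, fun T => ⟨⟨T.1, ?_, T.2.1, ?_⟩, ?_⟩, ?_, ?_⟩
      · have := congrArg Subtype.val T.2
        simpa [φ] using this
      · -- finrank T = t + 1
        have h1 := Submodule.finrank_sup_add_finrank_inf_eq K T.1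
        rw [T.2.1, T.2.2, hW, hK] at h1
        simp only [finrank_bot] at h1
        omega
      · rw [T.2.2]; exact W.2
      · exact Subtype.ext T.2.2
      · intro T; rfl
      · intro T; rfl
    -- now relate to complements inside W
    set W' := W.1
    let K' : Submodule F W' := K.comap W'.subtype
    have hmapK : K'.map W'.subtype = K := by
      rw [Submodule.map_comap_subtype, inf_eq_right.2 hKW]
    have hinj : Function.Injective W'.subtype := Subtype.coe_injective
    have e3 : {T' : Submodule F W' // IsCompl K' T'} ≃
        {T : Submodule F V // K ⊓ T = ⊥ ∧ K ⊔ T = W'} := by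
      refine ⟨fun T' => ⟨T'.1.map W'.subtype, ?_, ?_⟩, fun T => ⟨T.1.comap W'.subtype, ?_⟩,
        ?_, ?_⟩
      · rw [← hmapK, ← Submodule.map_inf _ hinj, T'.2.inf_eq_bot, Submodule.map_bot]
      · rw [← hmapK, ← Submodule.map_sup, T'.2.sup_eq_top, Submodule.map_top,
          Submodule.range_subtype]
      · -- IsCompl K' (comap T)
        have hTW : T.1 ≤ W' := le_sup_right.trans T.2.2.le
        have hmapT : (T.1.comap W'.subtype).map W'.subtype = T.1 := by
          rw [Submodule.map_comap_subtype, inf_eq_right.2 hTW]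
        constructor
        · rw [disjoint_iff]
          apply Submodule.map_injective_of_injective hinj
          rw [Submodule.map_inf _ hinj, hmapK, hmapT, T.2.1, Submodule.map_bot]
        · rw [codisjoint_iff]
          apply Submodule.map_injective_of_injective hinj
          rw [Submodule.map_sup, hmapK, hmapT, T.2.2, Submodule.map_top,
            Submodule.range_subtype]
      · intro T'
        apply Subtype.ext
        exact Submodule.comap_map_eq_of_injective hinj T'.1
      · intro T
        apply Subtype.ext
        have hTW : T.1 ≤ W' := le_sup_right.trans T.2.2.le
        show Submodule.map W'.subtype (Submodule.comap W'.subtype T.1) = T.1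
        rw [Submodule.map_comap_subtype]
        exact inf_eq_right.2 hTW
    haveI : FiniteDimensional F W' := FiniteDimensional.finiteDimensional_submodule W'
    have hfrK' : finrank F K' = k + 1 := by
      rw [← hK]
      exact LinearEquiv.finrank_eq (Submodule.comapSubtypeEquivOfLe hKW)
    have hcount := count_compl F K'
    rw [← Nat.card_eq_fintype_card, Nat.card_congr (e2.trans (e3.symm))]
    rw [hcount, hfrK', hW, hq, Nat.add_sub_cancel]
  rw [Finset.sum_congr rfl (fun W _ => key W)]
  simp [Finset.card_univ, Fintype.card_coe, mul_comm]
end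

section
/- Recursive construction of partial blocking sets: Let V be a finite-dimensional vector space, K ≤ V a subspace. Suppose B_K is a set of (t₁+1)-dimensional subspaces of K blocking a family S_K of (s₁+1)-dimensional subspaces of K (every member of S_K contains a member of B_K), and B_{V/K} is a set of (t₂+1)-dimensional subspaces of V/K blocking a family S_{V/K} of (s₂+1)-dimensional subspaces of V/K. Let B be the set of subspaces T ≤ V of dimension t₁+t₂+2 with K ∩ T ∈ B_K and (K+T)/K ∈ B_{V/K}, and let S be the set of subspaces S ≤ V of dimension s₁+s₂+2 with K ∩ S ∈ S_K and (K+S)/K ∈ S_{V/K}. Then every S ∈ S contains some T ∈ B. -/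
theorem stmt8 (F V : Type*) [Field F] [AddCommGroup V] [Module F V]
    [FiniteDimensional F V] (K : Submodule F V)
    (t₁ s₁ t₂ s₂ : ℕ)
    (h₁ : t₁ ≤ s₁) (h₂ : s₁ ≤ Module.finrank F K)
    (h₃ : t₂ ≤ s₂) (h₄ : s₂ ≤ Module.finrank F (V ⧸ K))
    (BK SK : Set (Submodule F K)) (BQ SQ : Set (Submodule F (V ⧸ K)))
    (hBK : ∀ T ∈ BK, Module.finrank F T = t₁)
    (hSK : ∀ S ∈ SK, Module.finrank F S = s₁)
    (hBQ : ∀ T ∈ BQ, Module.finrank F T = t₂)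
    (hSQ : ∀ S ∈ SQ, Module.finrank F S = s₂)
    (hblockK : ∀ S ∈ SK, ∃ T ∈ BK, T ≤ S)
    (hblockQ : ∀ S ∈ SQ, ∃ T ∈ BQ, T ≤ S) :
    ∀ S : Submodule F V,
      Module.finrank F S = s₁ + s₂ →
      Submodule.comap K.subtype S ∈ SK →
      Submodule.map K.mkQ S ∈ SQ →
      ∃ T : Submodule F V,
        Module.finrank F T = t₁ + t₂ ∧
        Submodule.comap K.subtype T ∈ BK ∧
        Submodule.map K.mkQ T ∈ BQ ∧
        T ≤ S := by
  intro S hS hSKmem hSQmem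
  obtain ⟨TK, hTKmem, hTKle⟩ := hblockK _ hSKmem
  obtain ⟨TQ, hTQmem, hTQle⟩ := hblockQ _ hSQmem
  -- f : S → V⧸K
  set f : S →ₗ[F] V ⧸ K := K.mkQ.comp S.subtype with hf
  -- P : preimage of TQ in S
  set P : Submodule F S := Submodule.comap f TQ with hP
  have hfP : ∀ x : P, f x.1 ∈ TQ := fun x => x.2
  set fP : P →ₗ[F] TQ := (f.comp P.subtype).codRestrict TQ (fun x => x.2) with hfP'
  have hfPsurj : Function.Surjective fP := by
    intro y
    have hy : (y : V ⧸ K) ∈ Submodule.map K.mkQ S := hTQle y.2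
    obtain ⟨s, hs, hseq⟩ := hy
    have hmem : (⟨s, hs⟩ : S) ∈ P := by
      simp only [hP, Submodule.mem_comap, hf, LinearMap.comp_apply, Submodule.subtype_apply]
      rw [hseq]; exact y.2
    refine ⟨⟨⟨s, hs⟩, hmem⟩, ?_⟩
    apply Subtype.ext
    simpa [hfP', hf] using hseq
  obtain ⟨g, hg⟩ := fP.exists_rightInverse_of_surjective (LinearMap.range_eq_top.2 hfPsurj)
  -- σ : TQ → V, a section of mkQ with values in S
  set σ : TQ →ₗ[F] V := S.subtype.comp ((P.subtype).comp g) with hσ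
  have hσS : ∀ y : TQ, σ y ∈ S := fun y => (P.subtype (g y)).2
  have hσsec : ∀ y : TQ, K.mkQ (σ y) = (y : V ⧸ K) := by
    intro y
    have := congrArg (fun h => ((h : TQ →ₗ[F] TQ) y : V ⧸ K)) hg
    simpa [hσ, hfP', hf] using this
  have hσinj : Function.Injective σ := by
    intro a b hab
    have : (a : V ⧸ K) = (b : V ⧸ K) := by rw [← hσsec a, ← hσsec b, hab]
    exact Subtype.ext this
  set L : Submodule F V := LinearMap.range σ with hL
  set A : Submodule F V := Submodule.map K.subtype TK with hA
  have hAK : A ≤ K := Submodule.map_subtype_le _ _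
  have hAS : A ≤ S := by
    rintro _ ⟨a, ha, rfl⟩
    exact hTKle ha
  have hLS : L ≤ S := by
    rintro _ ⟨y, rfl⟩
    exact hσS y
  have hKL : Disjoint K L := by
    rw [disjoint_iff_inf_le]
    rintro x ⟨hxK, y, rfl⟩
    have h0 : K.mkQ (σ y) = 0 := (Submodule.Quotient.mk_eq_zero K).2 hxK
    have : (y : V ⧸ K) = 0 := by rw [← hσsec y, h0]
    have : y = 0 := Subtype.ext this
    simp [this]
  refine ⟨A ⊔ L, ?_, ?_, ?_, sup_le hAS hLS⟩
  · -- finrank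
    have hAL : Disjoint A L := hKL.mono_left hAK
    have hdimA : Module.finrank F A = t₁ := by
      rw [hA, Submodule.finrank_map_subtype_eq]
      exact hBK _ hTKmem
    have hdimL : Module.finrank F L = t₂ := by
      rw [hL, LinearMap.finrank_range_of_inj hσinj]
      exact hBQ _ hTQmem
    have := Submodule.finrank_sup_add_finrank_inf_eq A L
    rw [hAL.eq_bot, finrank_bot, add_zero, hdimA, hdimL] at this
    exact this
  · -- comap subtype
    have heq : Submodule.comap K.subtype (A ⊔ L) = TK := by
      apply le_antisymm
      · rintro a ha
        rcases Submodule.mem_sup.1 ha with ⟨u, hu, v, hv, huv⟩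
        rw [Submodule.subtype_apply] at huv
        have hvK : v ∈ K := by
          have hveq : v = (a : V) - u := eq_sub_of_add_eq' huv
          rw [hveq]
          exact K.sub_mem a.2 (hAK hu)
        have hv0 : v = 0 := by
          have := hKL.eq_bot ▸ Submodule.mem_inf.2 ⟨hvK, hv⟩
          simpa using this
        have : (a : V) ∈ A := by rw [← huv, hv0, add_zero]; exact hu
        obtain ⟨b, hb, hba⟩ := this
        have : b = a := Subtype.ext hba
        rwa [← this]
      · intro a ha
        exact Submodule.mem_sup_left ⟨a, ha, rfl⟩
    rw [heq]; exact hTKmem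
  · -- map mkQ
    have heq : Submodule.map K.mkQ (A ⊔ L) = TQ := by
      rw [Submodule.map_sup]
      have hA0 : Submodule.map K.mkQ A = ⊥ := by
        rw [Submodule.eq_bot_iff]
        rintro _ ⟨x, hx, rfl⟩
        exact (Submodule.Quotient.mk_eq_zero K).2 (hAK hx)
      have hL0 : Submodule.map K.mkQ L = TQ := by
        apply le_antisymm
        · rintro _ ⟨_, ⟨y, rfl⟩, rfl⟩
          rw [show K.mkQ (σ y) = (y : V ⧸ K) from hσsec y]
          exact y.2
        · intro q hq
          exact ⟨σ ⟨q, hq⟩, ⟨⟨q, hq⟩, rfl⟩, hσsec ⟨q, hq⟩⟩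
      rw [hA0, hL0, bot_sup_eq]
    rw [heq]; exact hTQmem
end

section
/- Standard equation lower bound: Let V be an (n+1)-dimensional vector space over F_q, n ≥ 2, and let B be a set of 2-dimensional subspaces of V such that every 3-dimensional subspace contains a member of B. Then |B| ≥ (q^{n+1} − 1)(q^{n−1} − 1)/(q² − 1)². -/
open Finset Module Submodule

section Aux

variable {F : Type*} [Field F] [Fintype F]

/-- number of 1-dimensional subspaces of a finite module, times (q-1), is q^d - 1 -/
lemma count_rank_one (M : Type*) [AddCommGroup M] [Module F M] [Finite M] :
    Nat.card {p : Submodule F M // Module.finrank F p = 1} * (Fintype.card F - 1)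
      = Fintype.card F ^ Module.finrank F M - 1 := by
  classical
  letI : Fintype M := Fintype.ofFinite M
  letI : Finite (Submodule F M) :=
    Finite.of_injective (fun W : Submodule F M => (W : Set M)) SetLike.coe_injective
  letI : Fintype (Submodule F M) := Fintype.ofFinite _
  set q := Fintype.card F with hqdef
  have hq1 : 1 ≤ q := Fintype.card_pos
  set s : Finset M := univ.filter (fun v => v ≠ 0) with hs
  set t : Finset (Submodule F M) := univ.filter (fun p => Module.finrank F p = 1) with ht
  have hst : ∀ v ∈ s, (Submodule.span F {v}) ∈ t := by
    intro v hv
    simp only [hs, mem_filter, mem_univ, true_and] at hv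
    simp only [ht, mem_filter, mem_univ, true_and]
    exact finrank_span_singleton hv
  have hfib : ∀ p ∈ t, (s.filter (fun v => Submodule.span F {v} = p)).card = q - 1 := by
    intro p hp
    simp only [ht, mem_filter, mem_univ, true_and] at hp
    have hset : s.filter (fun v => Submodule.span F {v} = p)
        = (univ.filter (fun v : M => v ∈ p)).erase 0 := by
      ext v
      simp only [hs, mem_filter, mem_univ, true_and, Finset.mem_erase, filter_filter]
      constructor
      · rintro ⟨hv0, hsp⟩
        exact ⟨hv0, by rw [← hsp]; exact Submodule.mem_span_singleton_self v⟩
      · rintro ⟨hv0, hvp⟩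
        refine ⟨hv0, ?_⟩
        have hle : Submodule.span F {v} ≤ p := by
          rw [Submodule.span_le, Set.singleton_subset_iff]; exact hvp
        exact Submodule.eq_of_le_of_finrank_le hle
          (by rw [finrank_span_singleton hv0, hp])
    rw [hset]
    have h0 : (0 : M) ∈ univ.filter (fun v : M => v ∈ p) := by
      simp [Submodule.zero_mem]
    rw [Finset.card_erase_of_mem h0]
    have hcardp : (univ.filter (fun v : M => v ∈ p)).card = q := by
      have h1 : Fintype.card {v : M // v ∈ p} = (univ.filter (fun v : M => v ∈ p)).card :=
        Fintype.card_subtype _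
      have h3 : Fintype.card {v : M // v ∈ p} = q ^ Module.finrank F p :=
        card_eq_pow_finrank (K := F) (V := {v : M // v ∈ p})
      rw [hp, pow_one] at h3
      omega
    rw [hcardp]
  have key : s.card = ∑ p ∈ t, (s.filter (fun v => Submodule.span F {v} = p)).card :=
    Finset.card_eq_sum_card_fiberwise hst
  rw [Finset.sum_congr rfl hfib, Finset.sum_const, smul_eq_mul] at key
  have hscard : s.card = q ^ Module.finrank F M - 1 := by
    have h1 : s = univ.erase 0 := by
      ext v; simp [hs]
    rw [h1, Finset.card_erase_of_mem (mem_univ _), Finset.card_univ]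
    rw [card_eq_pow_finrank (K := F) (V := M)]
  have htcard : Nat.card {p : Submodule F M // Module.finrank F p = 1} = t.card := by
    rw [Nat.card_eq_fintype_card, Fintype.card_subtype]
  rw [htcard]
  omega

end Aux

section Aux2

variable {F V : Type*} [Field F] [Fintype F] [AddCommGroup V] [Module F V]
  [FiniteDimensional F V]

lemma finrank_map_mkQ_add (W X : Submodule F V) (h : W ≤ X) :
    Module.finrank F (X.map W.mkQ) + Module.finrank F W = Module.finrank F X := by
  have hr := LinearMap.finrank_range_add_finrank_ker ((W.mkQ).comp X.subtype)
  rw [LinearMap.range_comp, Submodule.range_subtype, LinearMap.ker_comp, Submodule.ker_mkQ] at hr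
  rwa [(Submodule.comapSubtypeEquivOfLe h).finrank_eq] at hr

/-- points inside W count -/
lemma count_points_le (W : Submodule F V) :
    Nat.card {p : Submodule F V // Module.finrank F p = 1 ∧ p ≤ W} * (Fintype.card F - 1)
      = Fintype.card F ^ Module.finrank F W - 1 := by
  classical
  have e : {Y : Submodule F W // Module.finrank F Y = 1}
      ≃ {p : Submodule F V // Module.finrank F p = 1 ∧ p ≤ W} :=
    { toFun := fun Y => ⟨Y.1.map W.subtype,
        by rw [← (Submodule.equivMapOfInjective W.subtype W.injective_subtype Y.1).finrank_eq]
           exact Y.2,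
        Submodule.map_subtype_le W Y.1⟩
      invFun := fun p => ⟨Submodule.comap W.subtype p.1,
        by
          have hmap : (Submodule.comap W.subtype p.1).map W.subtype = p.1 := by
            rw [Submodule.map_comap_subtype, inf_eq_right.mpr p.2.2]
          have := (Submodule.equivMapOfInjective W.subtype W.injective_subtype
            (Submodule.comap W.subtype p.1)).finrank_eq
          rw [hmap] at this
          rw [this]; exact p.2.1⟩
      left_inv := fun Y => Subtype.ext
        (by show (Y.1.map W.subtype).comap W.subtype = Y.1
            exact Submodule.comap_map_eq_of_injective W.injective_subtype Y.1)
      right_inv := fun p => Subtype.ext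
        (by show (Submodule.comap W.subtype p.1).map W.subtype = p.1
            rw [Submodule.map_comap_subtype, inf_eq_right.mpr p.2.2]) }
  rw [← Nat.card_congr e]
  haveI : Finite V := Module.finite_of_finite F
  haveI : Finite W := Subtype.finite
  exact count_rank_one (F := F) W

/-- subspaces one dimension above W count -/
lemma count_over (W : Submodule F V) :
    Nat.card {X : Submodule F V //
        Module.finrank F X = Module.finrank F W + 1 ∧ W ≤ X} * (Fintype.card F - 1)
      = Fintype.card F ^ (Module.finrank F V - Module.finrank F W) - 1 := by
  classical
  have hWle : ∀ Y : Submodule F (V ⧸ W), W ≤ Y.comap W.mkQ := by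
    intro Y
    have h2 := Submodule.comap_mono (f := W.mkQ) (bot_le : ⊥ ≤ Y)
    rwa [Submodule.comap_bot, Submodule.ker_mkQ] at h2
  have e : {Y : Submodule F (V ⧸ W) // Module.finrank F Y = 1}
      ≃ {X : Submodule F V // Module.finrank F X = Module.finrank F W + 1 ∧ W ≤ X} :=
    { toFun := fun Y => ⟨Y.1.comap W.mkQ,
        by
          have hmap : (Y.1.comap W.mkQ).map W.mkQ = Y.1 :=
            Submodule.map_comap_eq_of_surjective W.mkQ_surjective _
          have hr := finrank_map_mkQ_add W (Y.1.comap W.mkQ) (hWle Y.1)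
          rw [hmap, Y.2] at hr
          omega,
        hWle Y.1⟩
      invFun := fun X => ⟨X.1.map W.mkQ,
        by
          have hr := finrank_map_mkQ_add W X.1 X.2.2
          rw [X.2.1] at hr
          omega⟩
      left_inv := fun Y => Subtype.ext
        (by show (Y.1.comap W.mkQ).map W.mkQ = Y.1
            exact Submodule.map_comap_eq_of_surjective W.mkQ_surjective Y.1)
      right_inv := fun X => Subtype.ext
        (by show (X.1.map W.mkQ).comap W.mkQ = X.1
            rw [Submodule.comap_map_eq, Submodule.ker_mkQ, sup_eq_left.mpr X.2.2]) }
  rw [← Nat.card_congr e]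
  haveI : Finite V := Module.finite_of_finite F
  haveI : Finite (V ⧸ W) := Finite.of_surjective _ W.mkQ_surjective
  have hq : Module.finrank F (V ⧸ W) = Module.finrank F V - Module.finrank F W := by
    have := Submodule.finrank_quotient_add_finrank W
    omega
  rw [← hq]
  exact count_rank_one (F := F) (V ⧸ W)

end Aux2

lemma stmt12_final_arith (b c N m1 m2 s2 P qq : ℤ)
    (hb0 : 0 ≤ b) (hm10 : 0 ≤ m1) (hs20 : 0 ≤ s2)
    (hq0 : 2 ≤ qq) (hm2s2 : s2 ≤ m2)
    (hmain : c * s2 + P ≤ b * ((qq + 1) * (m2 - 1)))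
    (hCS : (b * (qq + 1)) ^ 2 ≤ m1 * (b * (qq + 1) + P))
    (hsplit : c + b = N)
    (hNL : N * (qq + 1) = m1 * m2) :
    m1 * s2 ≤ b * (qq + 1) ^ 2 := by
  have hA : m1 * (c * s2) + (b * (qq + 1)) ^ 2 ≤ m1 * (b * (qq + 1) * m2) := by
    have h1 := mul_le_mul_of_nonneg_left hmain hm10
    linarith [h1, hCS]
  have hA2 := mul_le_mul_of_nonneg_right hA (by linarith : (0 : ℤ) ≤ qq + 1)
  have hc1 : c * (qq + 1) = m1 * m2 - b * (qq + 1) := by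
    linear_combination (qq + 1) * hsplit + hNL
  have hc2 : m1 * s2 * (c * (qq + 1)) = m1 * s2 * (m1 * m2 - b * (qq + 1)) := by rw [hc1]
  rcases le_or_gt (m1 * m2) (b * (qq + 1)) with hcase | hcase
  · have h1 : m1 * s2 ≤ m1 * m2 := mul_le_mul_of_nonneg_left hm2s2 hm10
    have hbq : 0 ≤ b * (qq + 1) := mul_nonneg hb0 (by linarith)
    have h2 : b * (qq + 1) * 1 ≤ b * (qq + 1) * (qq + 1) :=
      mul_le_mul_of_nonneg_left (by linarith : (1 : ℤ) ≤ qq + 1) hbq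
    nlinarith [h1, h2]
  · have key : (m1 * s2 - b * (qq + 1) ^ 2) * (m1 * m2 - b * (qq + 1)) ≤ 0 := by
      nlinarith [hA2, hc2]
    by_contra hcon
    push_neg at hcon
    have hpos := mul_pos (sub_pos.mpr hcon) (sub_pos.mpr hcase)
    linarith [key, hpos]

set_option maxHeartbeats 1000000 in
theorem stmt12 (F V : Type*) [Field F] [Fintype F] [AddCommGroup V] [Module F V]
    [FiniteDimensional F V] (n q : ℕ) (hn : 2 ≤ n)
    (hq : Fintype.card F = q)
    (hV : Module.finrank F V = n + 1)
    (B : Finset (Submodule F V))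
    (hdim : ∀ T ∈ B, Module.finrank F T = 2)
    (hblock : ∀ S : Submodule F V, Module.finrank F S = 3 → ∃ T ∈ B, T ≤ S) :
    B.card * ((q ^ 2 - 1) ^ 2) ≥ (q ^ (n + 1) - 1) * (q ^ (n - 1) - 1) := by
  classical
  subst hq
  haveI : Finite V := Module.finite_of_finite F
  haveI : Finite (Submodule F V) :=
    Finite.of_injective (fun W : Submodule F V => (W : Set V)) SetLike.coe_injective
  letI : Fintype (Submodule F V) := Fintype.ofFinite _
  set q := Fintype.card F with hqd
  have hq2 : 2 ≤ q := Fintype.one_lt_card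
  -- the three Finsets
  set pts : Finset (Submodule F V) := Finset.univ.filter (fun p => Module.finrank F p = 1)
    with hpts
  set lns : Finset (Submodule F V) := Finset.univ.filter (fun L => Module.finrank F L = 2)
    with hlns
  set pls : Finset (Submodule F V) := Finset.univ.filter (fun S => Module.finrank F S = 3)
    with hpls
  -- Gaussian numbers
  have hdvd : ∀ k : ℕ, (q - 1) ∣ (q ^ k - 1) := fun k => by
    simpa using Nat.sub_dvd_pow_sub_pow q 1 k
  set m1 := (q ^ (n + 1) - 1) / (q - 1) with hm1d
  set m2 := (q ^ n - 1) / (q - 1) with hm2d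
  set s2 := (q ^ (n - 1) - 1) / (q - 1) with hs2d
  have hm1 : m1 * (q - 1) = q ^ (n + 1) - 1 := Nat.div_mul_cancel (hdvd _)
  have hm2 : m2 * (q - 1) = q ^ n - 1 := Nat.div_mul_cancel (hdvd _)
  have hs2 : s2 * (q - 1) = q ^ (n - 1) - 1 := Nat.div_mul_cancel (hdvd _)
  have hqpow : ∀ k : ℕ, 1 ≤ q ^ k := fun k => Nat.one_le_pow _ _ (by omega)
  have hm2pos : 1 ≤ m2 := by
    have h := hm2
    have h2 : q ≤ q ^ n := by
      calc q = q ^ 1 := (pow_one q).symm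
      _ ≤ q ^ n := Nat.pow_le_pow_right (by omega) (by omega)
    rcases Nat.eq_zero_or_pos m2 with h0 | h1
    · rw [h0] at h; omega
    · exact h1
  have hs2m2 : s2 ≤ m2 := by
    have h2 : q ^ (n - 1) ≤ q ^ n := Nat.pow_le_pow_right (by omega) (by omega)
    have h3 : s2 * (q - 1) ≤ m2 * (q - 1) := by omega
    exact Nat.le_of_mul_le_mul_right h3 (by omega)
  -- bridge between Finset.card and Nat.card
  have hbridge : ∀ (φ : Submodule F V → Prop) (inst : DecidablePred φ),
      (Finset.univ.filter φ).card = Nat.card {x : Submodule F V // φ x} := by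
    intro φ inst
    letI := inst
    rw [Nat.card_eq_fintype_card, Fintype.card_subtype]
  -- counting points inside a rank 2 subspace
  have hsq1 : (q + 1) * (q - 1) = q ^ 2 - 1 := by
    have hgen : ∀ m : ℕ, 2 ≤ m → (m + 1) * (m - 1) = m ^ 2 - 1 := by
      intro m hm
      obtain ⟨k, rfl⟩ : ∃ k, m = k + 2 := ⟨m - 2, by omega⟩
      have h1 : (k + 2) ^ 2 = k * k + 4 * k + 4 := by ring
      have h2 : (k + 2 + 1) * (k + 2 - 1) = k * k + 4 * k + 3 := by
        have h3 : k + 2 - 1 = k + 1 := by omega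
        rw [h3]
        ring
      omega
    exact hgen q hq2
  have hptsin : ∀ L : Submodule F V, Module.finrank F L = 2 →
      (pts.filter (fun p => p ≤ L)).card = q + 1 := by
    intro L hL
    have h1 : (pts.filter (fun p => p ≤ L))
        = Finset.univ.filter (fun p : Submodule F V => Module.finrank F p = 1 ∧ p ≤ L) := by
      rw [hpts, Finset.filter_filter]
    have h2 := count_points_le (F := F) L
    rw [hL] at h2
    have h5 : (pts.filter (fun p => p ≤ L)).card * (q - 1) = (q + 1) * (q - 1) := by
      rw [h1, hbridge, h2, hsq1]
    exact Nat.eq_of_mul_eq_mul_right (by omega) h5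
  -- counting lines through a point
  have hlnthr : ∀ p ∈ pts, (lns.filter (fun L => p ≤ L)).card = m2 := by
    intro p hp
    have hp1 : Module.finrank F p = 1 := by
      rw [hpts] at hp; simpa using hp
    have h1 : (lns.filter (fun L => p ≤ L))
        = Finset.univ.filter (fun L : Submodule F V => Module.finrank F L = Module.finrank F p + 1 ∧ p ≤ L) := by
      rw [hlns, Finset.filter_filter]
      apply Finset.filter_congr
      intro L _
      rw [hp1]
    have h2 := count_over (F := F) p
    rw [hp1, hV] at h2
    have h3 : n + 1 - 1 = n := by omega
    rw [h3] at h2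
    have h5 : (lns.filter (fun L => p ≤ L)).card * (q - 1) = m2 * (q - 1) := by
      rw [h1, hbridge, hp1, h2, hm2]
    exact Nat.eq_of_mul_eq_mul_right (by omega) h5
  -- counting planes through a line
  have hplso : ∀ L ∈ lns, (pls.filter (fun S => L ≤ S)).card = s2 := by
    intro L hL
    have hL2 : Module.finrank F L = 2 := by
      rw [hlns] at hL; simpa using hL
    have h1 : (pls.filter (fun S => L ≤ S))
        = Finset.univ.filter (fun S : Submodule F V => Module.finrank F S = Module.finrank F L + 1 ∧ L ≤ S) := by
      rw [hpls, Finset.filter_filter]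
      apply Finset.filter_congr
      intro S _
      rw [hL2]
    have h2 := count_over (F := F) L
    rw [hL2, hV] at h2
    have h3 : n + 1 - 2 = n - 1 := by omega
    rw [h3] at h2
    have h5 : (pls.filter (fun S => L ≤ S)).card * (q - 1) = s2 * (q - 1) := by
      rw [h1, hbridge, hL2, h2, hs2]
    exact Nat.eq_of_mul_eq_mul_right (by omega) h5
  -- number of points
  have hpm1 : pts.card = m1 := by
    have h2 := count_points_le (F := F) (⊤ : Submodule F V)
    rw [finrank_top, hV] at h2
    have h5 : pts.card * (q - 1) = m1 * (q - 1) := by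
      rw [hpts, hbridge]
      rw [Nat.card_congr (Equiv.subtypeEquivRight
        (fun p : Submodule F V => (by simp : Module.finrank F p = 1 ↔
          Module.finrank F p = 1 ∧ p ≤ (⊤ : Submodule F V))))]
      rw [h2, hm1]
    exact Nat.eq_of_mul_eq_mul_right (by omega) h5
  -- points below a subspace of rank ≤ 1
  have hcnt01 : ∀ W : Submodule F V, Module.finrank F W ≤ 1 →
      (pts.filter (fun p => p ≤ W)).card = if W = ⊥ then 0 else 1 := by
    intro W hW
    by_cases hbot : W = ⊥
    · rw [if_pos hbot]
      rw [Finset.card_eq_zero, Finset.filter_eq_empty_iff]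
      intro p hp
      have hp1 : Module.finrank F p = 1 := by rw [hpts] at hp; simpa using hp
      intro hle
      rw [hbot, le_bot_iff] at hle
      rw [hle, finrank_bot] at hp1
      omega
    · rw [if_neg hbot]
      have hW1 : Module.finrank F W = 1 := by
        have h0 : Module.finrank F W ≠ 0 := fun h =>
          hbot (Submodule.finrank_eq_zero.mp h)
        omega
      have h1 : pts.filter (fun p => p ≤ W) = {W} := by
        ext p
        simp only [hpts, Finset.mem_filter, Finset.filter_filter, Finset.mem_univ, true_and,
          Finset.mem_singleton]
        constructor
        · rintro ⟨hp1, hle⟩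
          exact Submodule.eq_of_le_of_finrank_le hle (by omega)
        · rintro rfl
          exact ⟨hW1, le_rfl⟩
      rw [h1, Finset.card_singleton]
  -- rank of intersection of two distinct lines
  have hinf1 : ∀ L T : Submodule F V, Module.finrank F L = 2 → Module.finrank F T = 2 →
      L ≠ T → Module.finrank F (L ⊓ T : Submodule F V) ≤ 1 := by
    intro L T hL hT hne
    by_contra hgt
    push_neg at hgt
    have h1 : (L ⊓ T : Submodule F V) = L :=
      Submodule.eq_of_le_of_finrank_le inf_le_left (by omega)
    have h2 : L ≤ T := h1 ▸ inf_le_right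
    exact hne (Submodule.eq_of_le_of_finrank_le h2 (by omega))
  have hmeet : ∀ L T : Submodule F V, Module.finrank F L = 2 → Module.finrank F T = 2 →
      L ≠ T → (pts.filter (fun p => p ≤ L ∧ p ≤ T)).card
        = if L ⊓ T = ⊥ then 0 else 1 := by
    intro L T hL hT hne
    have h1 : pts.filter (fun p => p ≤ L ∧ p ≤ T) = pts.filter (fun p => p ≤ L ⊓ T) := by
      apply Finset.filter_congr
      intro p _
      simp [le_inf_iff]
    rw [h1, hcnt01 _ (hinf1 L T hL hT hne)]
  -- double counting
  have dct : ∀ (s t : Finset (Submodule F V)) (R : Submodule F V → Submodule F V → Prop)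
      [inst : ∀ x y, Decidable (R x y)],
      ∑ x ∈ s, (t.filter (R x)).card = ∑ y ∈ t, (s.filter (fun x => R x y)).card := by
    intro s t R inst
    simp only [Finset.card_filter]
    exact Finset.sum_comm
  set a : Submodule F V → ℕ := fun p => (B.filter (fun T => p ≤ T)).card with ha
  have hBsub : B ⊆ lns := by
    intro T hT
    rw [hlns]
    simp [hdim T hT]
  have hBlns : ∀ T ∈ B, Module.finrank F T = 2 := hdim
  -- E1
  have hE1 : ∑ p ∈ pts, a p = B.card * (q + 1) := by
    have h : ∑ p ∈ pts, (B.filter (fun T => p ≤ T)).card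
        = ∑ T ∈ B, (pts.filter (fun p => p ≤ T)).card := dct _ _ _
    rw [ha]
    rw [h]
    rw [Finset.sum_congr rfl (fun T hT => hptsin T (hdim T hT))]
    rw [Finset.sum_const, smul_eq_mul]
  -- E5
  have hNL : lns.card * (q + 1) = m1 * m2 := by
    have h : ∑ p ∈ pts, (lns.filter (fun L => p ≤ L)).card
        = ∑ L ∈ lns, (pts.filter (fun p => p ≤ L)).card := dct _ _ _
    rw [Finset.sum_congr rfl hlnthr] at h
    rw [Finset.sum_congr rfl (fun L hL => hptsin L
      (by rw [hlns] at hL; simpa using hL))] at h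
    rw [Finset.sum_const, Finset.sum_const, smul_eq_mul, smul_eq_mul, hpm1] at h
    exact h.symm
  -- E3 : lines meeting a given line of B
  have hmeetT : ∀ T ∈ B, (lns.filter (fun L => L ≠ T ∧ ¬ (T ⊓ L = ⊥))).card
      = (q + 1) * (m2 - 1) := by
    intro T hT
    have hT2 : Module.finrank F T = 2 := hdim T hT
    have hTlns : T ∈ lns := hBsub hT
    have h : ∑ p ∈ pts.filter (fun p => p ≤ T), (lns.filter (fun L => p ≤ L ∧ L ≠ T)).card
        = ∑ L ∈ lns, ((pts.filter (fun p => p ≤ T)).filter (fun p => p ≤ L ∧ L ≠ T)).card :=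
      dct _ _ _
    have hL1 : ∀ p ∈ pts.filter (fun p => p ≤ T),
        (lns.filter (fun L => p ≤ L ∧ L ≠ T)).card = m2 - 1 := by
      intro p hp
      obtain ⟨hp0, hpT⟩ := Finset.mem_filter.mp hp
      have e1 : lns.filter (fun L => p ≤ L ∧ L ≠ T)
          = (lns.filter (fun L => p ≤ L)).erase T := by
        ext L
        simp only [Finset.mem_filter, Finset.mem_erase]
        tauto
      rw [e1, Finset.card_erase_of_mem (Finset.mem_filter.mpr ⟨hTlns, hpT⟩), hlnthr p hp0]
    have hR1 : ∀ L ∈ lns, ((pts.filter (fun p => p ≤ T)).filter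
        (fun p => p ≤ L ∧ L ≠ T)).card
        = if L ≠ T ∧ ¬ (T ⊓ L = ⊥) then 1 else 0 := by
      intro L hL
      have hL2 : Module.finrank F L = 2 := by rw [hlns] at hL; simpa using hL
      by_cases hne : L = T
      · subst hne
        simp
      · have e2 : (pts.filter (fun p => p ≤ T)).filter (fun p => p ≤ L ∧ L ≠ T)
            = pts.filter (fun p => p ≤ T ∧ p ≤ L) := by
          rw [Finset.filter_filter]
          apply Finset.filter_congr
          intro p _
          constructor
          · rintro ⟨h1, h2, _⟩
            exact ⟨h1, h2⟩
          · rintro ⟨h1, h2⟩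
            exact ⟨h1, h2, hne⟩
        rw [e2, hmeet T L hT2 hL2 (fun hh => hne hh.symm)]
        by_cases hb : T ⊓ L = ⊥ <;> simp [hb, hne]
    rw [Finset.sum_congr rfl hL1, Finset.sum_congr rfl hR1] at h
    rw [Finset.sum_const, smul_eq_mul, hptsin T hT2] at h
    rw [← Finset.card_filter] at h
    exact h.symm
  -- E7 + E4
  set P : ℕ := ∑ L ∈ B, (B.filter (fun T => L ≠ T ∧ ¬ (T ⊓ L = ⊥))).card with hPd
  have hE7 : B.card * ((q + 1) * (m2 - 1))
      = ∑ L ∈ lns, (B.filter (fun T => L ≠ T ∧ ¬ (T ⊓ L = ⊥))).card := by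
    have h : ∑ T ∈ B, (lns.filter (fun L => L ≠ T ∧ ¬ (T ⊓ L = ⊥))).card
        = ∑ L ∈ lns, (B.filter (fun T => L ≠ T ∧ ¬ (T ⊓ L = ⊥))).card := dct _ _ _
    rw [Finset.sum_congr rfl hmeetT, Finset.sum_const, smul_eq_mul] at h
    exact h
  have hE4 : ∀ L ∈ lns \ B, s2 ≤ (B.filter (fun T => L ≠ T ∧ ¬ (T ⊓ L = ⊥))).card := by
    intro L hL
    obtain ⟨hLl, hLnB⟩ := Finset.mem_sdiff.mp hL
    have hL2 : Module.finrank F L = 2 := by rw [hlns] at hLl; simpa using hLl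
    have hpick : ∀ S : Submodule F V, Module.finrank F S = 3 → ∃ T, T ∈ B ∧ T ≤ S := by
      intro S hS
      obtain ⟨T, hT, hTS⟩ := hblock S hS
      exact ⟨T, hT, hTS⟩
    set f : Submodule F V → Submodule F V :=
      fun S => if h : Module.finrank F S = 3 then (hpick S h).choose else ⊥ with hf
    have hfspec : ∀ S : Submodule F V, Module.finrank F S = 3 → f S ∈ B ∧ f S ≤ S := by
      intro S h
      rw [hf]
      simp only [dif_pos h]
      exact (hpick S h).choose_spec
    have hgeom : ∀ S ∈ pls.filter (fun S => L ≤ S),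
        (f S ∈ B ∧ (L ≠ f S ∧ ¬ (f S ⊓ L = ⊥))) ∧ S = f S ⊔ L := by
      intro S hS
      obtain ⟨hSp, hLS⟩ := Finset.mem_filter.mp hS
      have hS3 : Module.finrank F S = 3 := by rw [hpls] at hSp; simpa using hSp
      obtain ⟨hfB, hfS⟩ := hfspec S hS3
      have hfT2 : Module.finrank F (f S) = 2 := hdim _ hfB
      have hneq : L ≠ f S := fun h => hLnB (h ▸ hfB)
      have hsup := Submodule.finrank_sup_add_finrank_inf_eq (f S) L
      rw [hfT2, hL2] at hsup
      have hle3 : Module.finrank F ((f S) ⊔ L : Submodule F V) ≤ 3 := by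
        have hsub3 : (f S) ⊔ L ≤ S := sup_le hfS hLS
        calc Module.finrank F ((f S) ⊔ L : Submodule F V)
            ≤ Module.finrank F S := Submodule.finrank_mono hsub3
        _ = 3 := hS3
      have hinfle : Module.finrank F ((f S) ⊓ L : Submodule F V) ≤ 1 :=
        hinf1 (f S) L hfT2 hL2 (fun h => hneq h.symm)
      have hinfpos : ¬ ((f S) ⊓ L = ⊥) := by
        intro hb
        rw [hb, finrank_bot] at hsup
        omega
      have hinfrk : Module.finrank F ((f S) ⊓ L : Submodule F V) = 1 := by
        have h0 : Module.finrank F ((f S) ⊓ L : Submodule F V) ≠ 0 := fun h =>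
          hinfpos (Submodule.finrank_eq_zero.mp h)
        omega
      refine ⟨⟨hfB, hneq, hinfpos⟩, ?_⟩
      have hrk3 : Module.finrank F ((f S) ⊔ L : Submodule F V) = 3 := by omega
      exact (Submodule.eq_of_le_of_finrank_le (sup_le hfS hLS) (by omega)).symm
    rw [← hplso L hLl]
    apply Finset.card_le_card_of_injOn f
    · intro S hS
      obtain ⟨⟨hfB, hcond⟩, _⟩ := hgeom S hS
      exact Finset.mem_filter.mpr ⟨hfB, hcond⟩
    · intro S1 hS1 S2 hS2 heq
      have h1 := (hgeom S1 hS1).2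
      have h2 := (hgeom S2 hS2).2
      rw [h1, h2, heq]
  have hmain : (lns \ B).card * s2 + P ≤ B.card * ((q + 1) * (m2 - 1)) := by
    have h1 : (lns \ B).card * s2
        ≤ ∑ L ∈ lns \ B, (B.filter (fun T => L ≠ T ∧ ¬ (T ⊓ L = ⊥))).card := by
      calc (lns \ B).card * s2 = ∑ _L ∈ lns \ B, s2 := by
            rw [Finset.sum_const, smul_eq_mul]
      _ ≤ _ := Finset.sum_le_sum hE4
    have h2 : ∑ L ∈ lns \ B, (B.filter (fun T => L ≠ T ∧ ¬ (T ⊓ L = ⊥))).card + P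
        = B.card * ((q + 1) * (m2 - 1)) := by
      rw [hPd, hE7]
      exact Finset.sum_sdiff hBsub
    omega
  have hcsplit : (lns \ B).card + B.card = lns.card := Finset.card_sdiff_add_card_eq_card hBsub
  -- sum of squares
  have hSq : ∑ p ∈ pts, a p * a p = B.card * (q + 1) + P := by
    have step1 : ∀ p ∈ pts, a p * a p
        = ∑ L ∈ B, ∑ T ∈ B, (if p ≤ L ∧ p ≤ T then 1 else 0) := by
      intro p _
      rw [ha]
      simp only [Finset.card_filter]
      rw [Finset.sum_mul_sum]
      apply Finset.sum_congr rfl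
      intro L _
      apply Finset.sum_congr rfl
      intro T _
      by_cases h1 : p ≤ L <;> by_cases h2 : p ≤ T <;> simp [h1, h2]
    rw [Finset.sum_congr rfl step1]
    rw [Finset.sum_comm]
    rw [Finset.sum_congr rfl (fun L _ => Finset.sum_comm)]
    have inner : ∀ L ∈ B, (∑ T ∈ B, ∑ p ∈ pts, if p ≤ L ∧ p ≤ T then 1 else 0)
        = (q + 1) + (B.filter (fun T => L ≠ T ∧ ¬ (T ⊓ L = ⊥))).card := by
      intro L hL
      have hL2 := hdim L hL
      have hsplitT : ∀ T ∈ B, (∑ p ∈ pts, if p ≤ L ∧ p ≤ T then 1 else 0)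
          = (pts.filter (fun p => p ≤ L ∧ p ≤ T)).card := by
        intro T _
        rw [Finset.card_filter]
      rw [Finset.sum_congr rfl hsplitT]
      rw [← Finset.add_sum_erase _ _ hL]
      congr 1
      · have e3 : pts.filter (fun p => p ≤ L ∧ p ≤ L) = pts.filter (fun p => p ≤ L) := by
          apply Finset.filter_congr
          intro p _
          simp
        rw [e3, hptsin L hL2]
      · rw [Finset.sum_congr rfl (fun T hT => by
          obtain ⟨hTne, hTB⟩ := Finset.mem_erase.mp hT
          rw [hmeet L T hL2 (hdim T hTB) (fun h => hTne h.symm)])]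
        have e4 : ∀ T ∈ B.erase L, (if L ⊓ T = ⊥ then 0 else 1)
            = (if (fun T => L ≠ T ∧ ¬ (T ⊓ L = ⊥)) T then 1 else 0) := by
          intro T hT
          obtain ⟨hTne, _⟩ := Finset.mem_erase.mp hT
          by_cases hb : L ⊓ T = ⊥
          · rw [if_pos hb, if_neg]
            rw [inf_comm] at hb
            simp [hb]
          · rw [if_neg hb, if_pos]
            rw [inf_comm] at hb
            exact ⟨fun h => hTne h.symm, hb⟩
        rw [Finset.sum_congr rfl e4]
        rw [← Finset.card_filter]
        congr 1
        ext T
        simp only [Finset.mem_filter, Finset.mem_erase]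
        constructor
        · rintro ⟨⟨hTne, hTB⟩, hc⟩
          exact ⟨hTB, hc⟩
        · rintro ⟨hTB, hne, hc⟩
          exact ⟨⟨fun h => hne h.symm, hTB⟩, hne, hc⟩
    rw [Finset.sum_congr rfl inner, Finset.sum_add_distrib, Finset.sum_const, smul_eq_mul,
      mul_comm]
  -- Cauchy-Schwarz
  have hCS : (B.card * (q + 1)) ^ 2 ≤ m1 * (B.card * (q + 1) + P) := by
    have h1 : ((∑ p ∈ pts, (a p : ℤ))) ^ 2
        ≤ (pts.card : ℤ) * ∑ p ∈ pts, (a p : ℤ) ^ 2 :=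
      sq_sum_le_card_mul_sum_sq
    have h2 : ∑ p ∈ pts, (a p : ℤ) = ((B.card * (q + 1) : ℕ) : ℤ) := by
      rw [← hE1]
      push_cast
      rfl
    have h3 : ∑ p ∈ pts, (a p : ℤ) ^ 2 = ((B.card * (q + 1) + P : ℕ) : ℤ) := by
      rw [← hSq]
      push_cast
      apply Finset.sum_congr rfl
      intro p _
      ring
    rw [h2, h3, hpm1] at h1
    exact_mod_cast h1
  -- final algebra over ℤ
  have hfinal : m1 * s2 ≤ B.card * (q + 1) ^ 2 := by
    have hzmain : ((lns \ B).card : ℤ) * s2 + P ≤ B.card * ((q + 1) * (m2 - 1)) := by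
      have := hmain
      have hcast : ((m2 - 1 : ℕ) : ℤ) = (m2 : ℤ) - 1 := by
        rw [Nat.cast_sub hm2pos]
        norm_num
      exact_mod_cast hmain
    have hzCS : ((B.card : ℤ) * (q + 1)) ^ 2 ≤ m1 * (B.card * (q + 1) + P) := by
      exact_mod_cast hCS
    have hzsplit : ((lns \ B).card : ℤ) + B.card = lns.card := by exact_mod_cast hcsplit
    have hzNL : (lns.card : ℤ) * (q + 1) = m1 * m2 := by exact_mod_cast hNL
    have hzm2 : ((m2 : ℤ) - 1) = ((m2 - 1 : ℕ) : ℤ) := by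
      rw [Nat.cast_sub hm2pos]; norm_num
    have hzs2m2 : (s2 : ℤ) ≤ m2 := by exact_mod_cast hs2m2
    have hgoal : (m1 : ℤ) * s2 ≤ B.card * (q + 1) ^ 2 := by
      have hmain2 : ((lns \ B).card : ℤ) * s2 + P
          ≤ (B.card : ℤ) * (((q : ℤ) + 1) * ((m2 : ℤ) - 1)) := by
        rw [hzm2]
        exact_mod_cast hmain
      exact stmt12_final_arith (B.card : ℤ) ((lns \ B).card : ℤ) (lns.card : ℤ)
        (m1 : ℤ) (m2 : ℤ) (s2 : ℤ) (P : ℤ) (q : ℤ)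
        (Int.natCast_nonneg _) (Int.natCast_nonneg _) (Int.natCast_nonneg _)
        (by exact_mod_cast hq2) hzs2m2 hmain2 hzCS hzsplit hzNL
    exact_mod_cast hgoal
  -- conclude
  have hq2eq : q ^ 2 - 1 = (q + 1) * (q - 1) := hsq1.symm
  calc (q ^ (n + 1) - 1) * (q ^ (n - 1) - 1)
      = (m1 * (q - 1)) * (s2 * (q - 1)) := by rw [hm1, hs2]
    _ = (m1 * s2) * ((q - 1) * (q - 1)) := by ring
    _ ≤ (B.card * (q + 1) ^ 2) * ((q - 1) * (q - 1)) := Nat.mul_le_mul_right _ hfinal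
    _ = B.card * (((q + 1) * (q - 1)) ^ 2) := by ring
    _ = B.card * ((q ^ 2 - 1) ^ 2) := by rw [hq2eq]
end

section
/- Density increment (q-analog Schönheim bound for (2,1)-blocking sets): define f(n,q) as the minimum size of a set B of 2-dimensional subspaces of F_q^{n+1} such that every 3-dimensional subspace contains a member of B. Then for all 2 ≤ k ≤ n, f(n,q)/[n+1 choose 2]_q ≥ f(k,q)/[k+1 choose 2]_q, where [m choose 2]_q denotes the Gaussian binomial coefficient. -/
/-- `fBlock F n` is the minimum size of a set of 2-dimensional subspaces of
`F^(n+1)` such that every 3-dimensional subspace contains a member, i.e. the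
minimum size of a (2,1)-blocking set in `PG(n, |F|)`. -/
noncomputable def fBlock (F : Type) [Field F] [Fintype F] (n : ℕ) : ℕ :=
  sInf {m : ℕ | ∃ B : Finset (Submodule F (Fin (n + 1) → F)),
    B.card = m ∧ (∀ T ∈ B, Module.finrank F T = 2) ∧
    (∀ S : Submodule F (Fin (n + 1) → F), Module.finrank F S = 3 →
      ∃ T ∈ B, T ≤ S)}

/-! Averaging over hyperplanes. A minimum (2,1)-blocking set `B` of `PG(n+1,q)` meets every
hyperplane in a (2,1)-blocking set of that hyperplane, so each of the `[n+2 choose 1]_q`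
hyperplanes contains at least `f(n,q)` members of `B`, while each member of `B` lies in exactly
`[n choose 1]_q` hyperplanes. Double counting gives `f(n,q) (q^(n+2) - 1) ≤ f(n+1,q) (q^n - 1)`,
i.e. `f(n,q) / [n+1 choose 2]_q` is nondecreasing in `n`. -/

open Module Submodule

theorem exists_le_finrank_eq {F V : Type*} [Field F] [AddCommGroup V] [Module F V]
    {S : Submodule F V} {n : ℕ} (hn : n ≤ finrank F S) : ∃ T ≤ S, finrank F T = n := by
  obtain ⟨f, hf⟩ := exists_linearIndependent_of_le_finrank hn
  refine ⟨(span F (Set.range f)).map S.subtype, map_subtype_le _ _, ?_⟩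
  rw [finrank_map_subtype_eq, finrank_span_eq_card hf, Fintype.card_fin]

section Counting

variable {F V : Type*} [Field F] [Fintype F] [AddCommGroup V] [Module F V] [FiniteDimensional F V]

theorem natCard_finrank_eq_one_mul :
    Nat.card {L : Submodule F V // finrank F L = 1} * (Fintype.card F - 1) =
      Fintype.card F ^ finrank F V - 1 := by
  rw [Fintype.card_eq_nat_card, ← Nat.card_congr (Projectivization.equivSubmodule F V),
    ← Projectivization.card, Module.natCard_eq_pow_finrank (K := F)]

theorem natCard_le_finrank_eq_one_mul (A : Submodule F V) :
    Nat.card {L : Submodule F V // L ≤ A ∧ finrank F L = 1} * (Fintype.card F - 1) =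
      Fintype.card F ^ finrank F A - 1 := by
  rw [← natCard_finrank_eq_one_mul]
  congr 1
  refine (Nat.card_congr <| ((MapSubtype.orderIso A).toEquiv.subtypeEquiv fun L => ?_).trans
    (Equiv.subtypeSubtypeEquivSubtypeInter (· ≤ A) fun L => finrank F L = 1)).symm
  exact Iff.of_eq (congrArg (· = 1) (finrank_map_subtype_eq A L).symm)

theorem natCard_hyperplanes_ge_mul (T : Submodule F V) :
    Nat.card {H : Submodule F V // T ≤ H ∧ finrank F H + 1 = finrank F V} *
        (Fintype.card F - 1) = Fintype.card F ^ (finrank F V - finrank F T) - 1 := by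
  have hdim (W : Submodule F V) := Subspace.finrank_add_finrank_dualAnnihilator_eq W
  have hT : finrank F T.dualAnnihilator = finrank F V - finrank F T := by
    have := hdim T
    omega
  rw [← hT, ← natCard_le_finrank_eq_one_mul]
  congr 1
  refine Nat.card_congr <|
    (Subspace.orderIsoFiniteDimensional (K := F) (V := V)).toEquiv.subtypeEquiv fun H => ?_
  change _ ↔ H.dualAnnihilator ≤ T.dualAnnihilator ∧ finrank F H.dualAnnihilator = 1
  rw [Subspace.dualAnnihilator_le_dualAnnihilator_iff]
  have := hdim H
  exact and_congr_right fun _ => by omega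

end Counting

open Finset

section Blocking

variable {F V W : Type*} [Field F] [AddCommGroup V] [Module F V] [AddCommGroup W] [Module F W]

def IsBlockingSet (B : Finset (Submodule F V)) : Prop :=
  (∀ T ∈ B, finrank F T = 2) ∧ ∀ S : Submodule F V, finrank F S = 3 → ∃ T ∈ B, T ≤ S

variable (F V) in
noncomputable def blockingNumber : ℕ :=
  sInf {m | ∃ B : Finset (Submodule F V), #B = m ∧ IsBlockingSet B}

theorem blockingNumber_le_card {B : Finset (Submodule F V)} (hB : IsBlockingSet B) :
    blockingNumber F V ≤ #B :=
  Nat.sInf_le ⟨B, rfl, hB⟩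

theorem exists_isBlockingSet_card_eq [Finite F] [FiniteDimensional F V] :
    ∃ B : Finset (Submodule F V), IsBlockingSet B ∧ #B = blockingNumber F V := by
  classical
  have := Module.finite_of_finite F (M := V)
  have := Fintype.ofFinite (Submodule F V)
  have hall : IsBlockingSet ({T | finrank F T = 2} : Finset (Submodule F V)) := by
    refine ⟨fun T hT => (mem_filter.1 hT).2, fun S hS => ?_⟩
    obtain ⟨T, hTS, hT⟩ := exists_le_finrank_eq (S := S) (n := 2) (by omega)
    exact ⟨T, mem_filter.2 ⟨mem_univ T, hT⟩, hTS⟩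
  obtain ⟨B, hcard, hB⟩ := Nat.sInf_mem (⟨_, _, rfl, hall⟩ :
    {m | ∃ B : Finset (Submodule F V), #B = m ∧ IsBlockingSet B}.Nonempty)
  exact ⟨B, hB, hcard⟩

open Classical in
theorem IsBlockingSet.comap {B : Finset (Submodule F V)} (hB : IsBlockingSet B)
    (f : W →ₗ[F] V) (hf : Function.Injective f) :
    IsBlockingSet ({T ∈ B | T ≤ LinearMap.range f}.image (Submodule.comap f)) := by
  have finrank_map (X : Submodule F W) : finrank F (X.map f) = finrank F X :=
    (Submodule.equivMapOfInjective f hf X).finrank_eq.symm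
  constructor
  · simp only [mem_image, mem_filter]
    rintro _ ⟨T, ⟨hTB, hTf⟩, rfl⟩
    rw [← finrank_map, Submodule.map_comap_eq_of_le hTf, hB.1 T hTB]
  · intro S hS
    obtain ⟨T, hTB, hTS⟩ := hB.2 (S.map f) (by rw [finrank_map, hS])
    refine ⟨T.comap f, mem_image.2 ⟨T, mem_filter.2 ⟨hTB, hTS.trans LinearMap.map_le_range⟩, rfl⟩,
      ?_⟩
    simpa only [Submodule.comap_map_eq_of_injective hf] using Submodule.comap_mono (f := f) hTS

open Classical in
theorem blockingNumber_le_card_filter_le [FiniteDimensional F V] [FiniteDimensional F W]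
    {B : Finset (Submodule F V)} (hB : IsBlockingSet B) {H : Submodule F V}
    (hH : finrank F W = finrank F H) : blockingNumber F W ≤ #{T ∈ B | T ≤ H} := by
  let e := LinearEquiv.ofFinrankEq W H hH
  let f := H.subtype ∘ₗ e.toLinearMap
  have hrange : LinearMap.range f = H := by
    rw [LinearMap.range_comp_of_range_eq_top _ e.range, range_subtype]
  have := (blockingNumber_le_card (hB.comap f (H.injective_subtype.comp e.injective))).trans
    card_image_le
  rwa [hrange] at this

open Classical in
theorem blockingNumber_mul_le [Fintype F] [FiniteDimensional F V] [FiniteDimensional F W]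
    {B : Finset (Submodule F V)} (hB : IsBlockingSet B) (hW : finrank F W + 1 = finrank F V) :
    blockingNumber F W * (Fintype.card F ^ finrank F V - 1) ≤
      #B * (Fintype.card F ^ (finrank F V - 2) - 1) := by
  have := Module.finite_of_finite F (M := V)
  have := Fintype.ofFinite (Submodule F V)
  set q := Fintype.card F
  let hyperplanes : Finset (Submodule F V) := {H | finrank F H + 1 = finrank F V}
  have card_ge_mul (T : Submodule F V) :
      #(hyperplanes.bipartiteBelow (· ≥ ·) T) * (q - 1) =
        q ^ (finrank F V - finrank F T) - 1 := by
    rw [← natCard_hyperplanes_ge_mul, Nat.card_eq_fintype_card, Fintype.card_subtype]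
    congr 2
    ext H
    simp [hyperplanes, bipartiteBelow, and_comm]
  have card_hyperplanes : #hyperplanes * (q - 1) = q ^ finrank F V - 1 := by
    simpa [bipartiteBelow] using card_ge_mul ⊥
  calc blockingNumber F W * (q ^ finrank F V - 1)
      = (∑ H ∈ hyperplanes, blockingNumber F W) * (q - 1) := by
        rw [sum_const, smul_eq_mul, ← card_hyperplanes]
        ring
    _ ≤ (∑ H ∈ hyperplanes, #(B.bipartiteAbove (· ≥ ·) H)) * (q - 1) := by
        gcongr with H hH
        simp only [hyperplanes, mem_filter] at hH
        exact blockingNumber_le_card_filter_le hB (by omega)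
    _ = ∑ T ∈ B, #(hyperplanes.bipartiteBelow (· ≥ ·) T) * (q - 1) := by
        rw [sum_card_bipartiteAbove_eq_sum_card_bipartiteBelow, sum_mul]
    _ = #B * (q ^ (finrank F V - 2) - 1) := by
        rw [sum_congr rfl fun T hT => (card_ge_mul T).trans (by rw [hB.1 T hT]), sum_const,
          smul_eq_mul]

end Blocking

theorem fBlock_eq_blockingNumber (F : Type) [Field F] [Fintype F] (n : ℕ) :
    fBlock F n = blockingNumber F (Fin (n + 1) → F) :=
  rfl

theorem fBlock_mul_le_succ (F : Type) [Field F] [Fintype F] (m : ℕ) :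
    fBlock F m * (Fintype.card F ^ (m + 2) - 1) ≤
      fBlock F (m + 1) * (Fintype.card F ^ m - 1) := by
  obtain ⟨B, hB, hcard⟩ := exists_isBlockingSet_card_eq (F := F) (V := Fin (m + 2) → F)
  have := blockingNumber_mul_le (W := Fin (m + 1) → F) hB (by simp)
  simpa [fBlock_eq_blockingNumber, hcard] using this

theorem cross_mul_le_of_cross_mul_le_succ {a g : ℕ → ℕ} {k n : ℕ} (hg : ∀ m ≥ k, 0 < g m)
    (h : ∀ m ≥ k, a m * g (m + 1) ≤ a (m + 1) * g m) (hkn : k ≤ n) :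
    a k * g n ≤ a n * g k := by
  induction n, hkn using Nat.le_induction with
  | base => exact le_rfl
  | succ n hkn ih =>
    refine Nat.le_of_mul_le_mul_right ?_ (hg n hkn)
    calc a k * g (n + 1) * g n = a k * g n * g (n + 1) := by ring
      _ ≤ a n * g k * g (n + 1) := Nat.mul_le_mul_right _ ih
      _ = a n * g (n + 1) * g k := by ring
      _ ≤ a (n + 1) * g n * g k := Nat.mul_le_mul_right _ (h n hkn)
      _ = a (n + 1) * g k * g n := by ring

theorem stmt13 (F : Type) [Field F] [Fintype F] (q n k : ℕ)
    (hq : Fintype.card F = q) (hk : 2 ≤ k) (hkn : k ≤ n) :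
    fBlock F n * ((q ^ (k + 1) - 1) * (q ^ k - 1)) ≥
      fBlock F k * ((q ^ (n + 1) - 1) * (q ^ n - 1)) := by
  have hq1 : 1 < q := hq ▸ Fintype.one_lt_card
  have pow_sub_one_pos (m : ℕ) (hm : m ≠ 0) : 0 < q ^ m - 1 :=
    Nat.sub_pos_of_lt (Nat.one_lt_pow hm hq1)
  refine cross_mul_le_of_cross_mul_le_succ (g := fun m => (q ^ (m + 1) - 1) * (q ^ m - 1))
    (fun m hm => Nat.mul_pos (pow_sub_one_pos _ m.succ_ne_zero) (pow_sub_one_pos _ (by omega)))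
    (fun m _ => ?_) hkn
  have step := hq ▸ fBlock_mul_le_succ F m
  calc fBlock F m * ((q ^ (m + 1 + 1) - 1) * (q ^ (m + 1) - 1))
      = fBlock F m * (q ^ (m + 2) - 1) * (q ^ (m + 1) - 1) := by ring
    _ ≤ fBlock F (m + 1) * (q ^ m - 1) * (q ^ (m + 1) - 1) := Nat.mul_le_mul_right _ step
    _ = fBlock F (m + 1) * ((q ^ (m + 1) - 1) * (q ^ m - 1)) := by ring
end

section
/- Eisfeld–Metsch special case: f(4,q) ≤ q⁴ + 2q² + q + 1, where f(4,q) is the minimum size of a set of 2-dimensional subspaces of F_q⁵ such that every 3-dimensional subspace of F_q⁵ contains a member of the set. -/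
open Module Submodule Projectivization
open scoped LinearAlgebra.Projectivization

section LineBlocking

variable {F V : Type*} [Field F] [AddCommGroup V] [Module F V]

def IsLineBlocking (B : Set (Submodule F V)) : Prop :=
  (∀ T ∈ B, finrank F T = 2) ∧ ∀ S : Submodule F V, finrank F S = 3 → ∃ T ∈ B, T ≤ S

theorem IsLineBlocking.image_linearEquiv {V' : Type*} [AddCommGroup V'] [Module F V']
    {B : Set (Submodule F V)} (hB : IsLineBlocking B) (e : V ≃ₗ[F] V') :
    IsLineBlocking (map (e : V →ₗ[F] V') '' B) := by
  refine ⟨?_, fun S hS ↦ ?_⟩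
  · rintro _ ⟨T, hT, rfl⟩
    rw [LinearEquiv.finrank_map_eq, hB.1 T hT]
  · obtain ⟨T, hT, hTS⟩ := hB.2 (S.comap (e : V →ₗ[F] V')) <| by
      rw [comap_equiv_eq_map_symm, LinearEquiv.finrank_map_eq, hS]
    exact ⟨_, ⟨T, hT, rfl⟩, map_le_iff_le_comap.mpr hTS⟩

theorem fBlock_le_ncard {F : Type} [Field F] [Fintype F] {n : ℕ}
    {B : Set (Submodule F (Fin (n + 1) → F))} (hfin : B.Finite) (hB : IsLineBlocking B) :
    fBlock F n ≤ B.ncard :=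
  Nat.sInf_le ⟨hfin.toFinset, (Set.ncard_eq_toFinset_card B hfin).symm,
    by simpa using hB.1, by simpa using hB.2⟩

end LineBlocking

theorem Set.ncard_range_le {α β : Type*} [Finite α] (f : α → β) :
    (Set.range f).ncard ≤ Nat.card α := by
  rw [← Set.image_univ, ← Set.ncard_univ]
  exact Set.ncard_image_le

section Linear

variable {F V : Type*} [Field F] [AddCommGroup V] [Module F V]

theorem Submodule.finrank_span_pair {x y : V} (h : LinearIndependent F ![x, y]) :
    finrank F (span F {x, y}) = 2 := by
  rw [← Matrix.range_cons_cons_empty x y ![], finrank_span_eq_card h, Fintype.card_fin]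

theorem Submodule.finrank_span_pair_mk_zero_mk_one {x y : V} (hx : x ≠ 0) :
    finrank F (span F {(x, (0 : F)), (y, 1)}) = 2 := by
  refine finrank_span_pair (LinearIndependent.pair_iff.mpr fun a b hab ↦ ?_)
  have hb : b = 0 := by simpa using congrArg Prod.snd hab
  subst hb
  simpa [hx] using hab

theorem Submodule.exists_finrank_eq [FiniteDimensional F V] {k : ℕ} (hk : k ≤ finrank F V) :
    ∃ W : Submodule F V, finrank F W = k := by
  have hli := (finBasis F V).linearIndependent.comp _ (Fin.castLE_injective hk)
  exact ⟨_, (finrank_span_eq_card hli).trans (Fintype.card_fin k)⟩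

theorem Submodule.exists_mem_inf_ne_zero_of_finrank_lt [FiniteDimensional F V]
    {s t : Submodule F V} (h : finrank F V < finrank F s + finrank F t) :
    ∃ v ∈ s, v ∈ t ∧ v ≠ 0 := by
  have : ¬Disjoint s t := fun hd ↦ (finrank_add_finrank_le_of_disjoint hd).not_gt h
  simpa [disjoint_def, and_assoc] using this

theorem Submodule.finrank_comap_inl (S : Submodule F (V × F)) :
    finrank F (S.comap (LinearMap.inl F V F)) =
      finrank F ↥(S ⊓ LinearMap.ker (LinearMap.snd F V F)) := by
  rw [← LinearMap.range_inl, inf_comm, ← map_comap_eq]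
  exact (equivMapOfInjective _ LinearMap.inl_injective _).finrank_eq

theorem Submodule.finrank_le_finrank_comap_inl_add_one [FiniteDimensional F V]
    (S : Submodule F (V × F)) : finrank F S ≤ finrank F (S.comap (LinearMap.inl F V F)) + 1 := by
  have hker : finrank F (LinearMap.ker (LinearMap.snd F V F)) = finrank F V := by
    rw [← LinearMap.range_inl, LinearMap.finrank_range_of_inj LinearMap.inl_injective]
  have := finrank_sup_add_finrank_inf_eq S (LinearMap.ker (LinearMap.snd F V F))
  have := (S ⊔ LinearMap.ker (LinearMap.snd F V F)).finrank_le
  rw [finrank_prod, finrank_self] at this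
  rw [finrank_comap_inl]
  omega

theorem Submodule.exists_mk_one_mem {S : Submodule F (V × F)}
    (hS : ¬S ≤ LinearMap.ker (LinearMap.snd F V F)) : ∃ u : V, (u, (1 : F)) ∈ S := by
  obtain ⟨w, hw, hw0⟩ := SetLike.not_le_iff_exists.mp hS
  refine ⟨(w.2)⁻¹ • w.1, ?_⟩
  convert S.smul_mem (w.2)⁻¹ hw using 1
  rw [Prod.smul_def, smul_eq_mul, inv_mul_cancel₀ (show w.2 ≠ 0 from hw0)]

end Linear

namespace EisfeldMetsch

variable {F K E : Type*} [Field F] [Field K] [Algebra F K]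
  [AddCommGroup E] [Module K E] [Module F E] [IsScalarTower F K E]

theorem exists_notMem_range_algebraMap (hK : finrank F K ≠ 1) :
    ∃ l : K, l ∉ Set.range (algebraMap F K) := by
  by_contra! h
  exact hK (Subalgebra.bot_eq_top_iff_finrank_eq_one.mp (eq_top_iff.mpr fun x _ ↦ h x))

theorem span_one_pair_eq_top {l : K} (hK : finrank F K = 2)
    (hl : l ∉ Set.range (algebraMap F K)) : span F {1, l} = (⊤ : Submodule F K) := by
  have : FiniteDimensional F K := Module.finite_of_finrank_pos (by omega)
  refine eq_top_of_finrank_eq ((finrank_span_pair ?_).trans hK.symm)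
  refine LinearIndependent.pair_iff.mpr fun a b hab ↦ ?_
  rcases eq_or_ne b 0 with rfl | hb
  · simpa using hab
  · refine absurd ⟨-(a / b), ?_⟩ hl
    rw [Algebra.smul_def, Algebra.smul_def, mul_one] at hab
    have hb' : algebraMap F K b ≠ 0 := by simpa using hb
    rw [map_neg, map_div₀]
    field_simp
    linear_combination -hab

theorem restrictScalars_span_singleton_le {l : K} (hl : span F {1, l} = (⊤ : Submodule F K))
    {S : Submodule F E} {v : E} (hv : v ∈ S) (hlv : l • v ∈ S) :
    (K ∙ v).restrictScalars F ≤ S := by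
  intro x hx
  obtain ⟨μ, rfl⟩ := mem_span_singleton.mp hx
  obtain ⟨a, b, rfl⟩ := mem_span_pair.mp (hl ▸ mem_top : μ ∈ span F {1, l})
  rw [add_smul, smul_assoc, smul_assoc, one_smul]
  exact S.add_mem (S.smul_mem a hv) (S.smul_mem b hlv)

theorem exists_mem_smul_mem_of_finrank_lt [FiniteDimensional F E] {l : K} (hl : l ≠ 0)
    {S : Submodule F E} (h : finrank F E < 2 * finrank F S) : ∃ v ∈ S, l • v ∈ S ∧ v ≠ 0 :=
  let φ := (LinearEquiv.smulOfNeZero K E l hl).restrictScalars F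
  exists_mem_inf_ne_zero_of_finrank_lt (t := S.comap (φ : E →ₗ[F] E)) <| by
    rwa [comap_equiv_eq_map_symm, LinearEquiv.finrank_map_eq, ← two_mul]

theorem exists_add_smul_eq [FiniteDimensional F E] {l : K} (hl : l ≠ 0) {S : Submodule F E}
    (h : finrank F E ≤ 2 * finrank F S) (hS : ∀ v ∈ S, l • v ∈ S → v = 0) (u : E) :
    ∃ x ∈ S, ∃ v ∈ S, x + l • v = u := by
  let φ := (LinearEquiv.smulOfNeZero K E l hl).restrictScalars F
  have hdisj : Disjoint S (S.map (φ : E →ₗ[F] E)) := by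
    rw [disjoint_def]
    rintro _ hx ⟨v, hv, rfl⟩
    simp [hS v hv hx]
  have htop := eq_top_of_disjoint S _ (by rwa [LinearEquiv.finrank_map_eq, ← two_mul]) hdisj
  obtain ⟨x, hx, _, ⟨v, hv, rfl⟩, hxv⟩ := mem_sup.mp (htop ▸ mem_top : u ∈ S ⊔ _)
  exact ⟨x, hx, v, hv, hxv⟩

variable (F) in
def spreadLine (p : ℙ K E) : Submodule F (E × F) :=
  (p.submodule.restrictScalars F).map (LinearMap.inl F E F)

variable (F) in
def transversalLine (l : K) (v : E) : Submodule F (E × F) :=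
  span F {(v, 0), (l • v, 1)}

def coneLine {W : Submodule F E} (p : ℙ F W) : Submodule F (E × F) :=
  span F {(((p.rep : W) : E), 0), (0, 1)}

def blockingLines (l : K) (W : Submodule F E) : Set (Submodule F (E × F)) :=
  Set.range (spreadLine F (K := K) (E := E)) ∪ transversalLine F l '' {0}ᶜ ∪
    Set.range (coneLine (W := W))

theorem finrank_spreadLine (p : ℙ K E) : finrank F (spreadLine F p) = finrank F K := by
  rw [spreadLine, ← (equivMapOfInjective _ LinearMap.inl_injective _).finrank_eq, p.submodule_eq]
  exact ((LinearEquiv.toSpanNonzeroSingleton K E _ p.rep_nonzero).restrictScalars F).finrank_eq.symm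

theorem spreadLine_mk_le {l : K} (hl : span F {1, l} = (⊤ : Submodule F K))
    {S : Submodule F (E × F)} {v : E} (hv0 : v ≠ 0) (hv : v ∈ S.comap (LinearMap.inl F E F))
    (hlv : l • v ∈ S.comap (LinearMap.inl F E F)) : spreadLine F (mk K v hv0) ≤ S := by
  rw [spreadLine, map_le_iff_le_comap, submodule_mk]
  exact restrictScalars_span_singleton_le hl hv hlv

theorem coneLine_mk_le {W : Submodule F E} {z : W} (hz0 : z ≠ 0) {S : Submodule F (E × F)}
    (hz : ((z : E), (0 : F)) ∈ S) (he : ((0 : E), (1 : F)) ∈ S) : coneLine (mk F z hz0) ≤ S := by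
  obtain ⟨a, ha⟩ := exists_smul_eq_mk_rep F z hz0
  rw [coneLine, span_le, Set.insert_subset_iff, Set.singleton_subset_iff, ← ha]
  exact ⟨by simpa [Units.smul_def] using S.smul_mem (a : F) hz, he⟩

theorem exists_mem_blockingLines_le (hK : finrank F K = 2) (hE : finrank K E = 2) {l : K}
    (hl : l ∉ Set.range (algebraMap F K)) {W : Submodule F E} (hW : finrank F W = 3)
    {S : Submodule F (E × F)} (hS : finrank F S = 3) : ∃ T ∈ blockingLines l W, T ≤ S := by
  have hE4 : finrank F E = 4 := by rw [← finrank_mul_finrank F K E, hK, hE]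
  have : FiniteDimensional F E := Module.finite_of_finrank_pos (by omega)
  have hl0 : l ≠ 0 := fun h ↦ hl ⟨0, by rw [h, map_zero]⟩
  set S' := S.comap (LinearMap.inl F E F)
  have spread : ∀ v ∈ S', l • v ∈ S' → v ≠ 0 → ∃ T ∈ blockingLines l W, T ≤ S :=
    fun v hv hlv hv0 ↦
      ⟨_, .inl (.inl ⟨_, rfl⟩), spreadLine_mk_le (span_one_pair_eq_top hK hl) hv0 hv hlv⟩
  by_cases hSH : S ≤ LinearMap.ker (LinearMap.snd F E F)
  · have hS' : finrank F S' = 3 := by rw [finrank_comap_inl, inf_eq_left.mpr hSH, hS]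
    obtain ⟨v, hv, hlv, hv0⟩ := exists_mem_smul_mem_of_finrank_lt hl0 (S := S') (by omega)
    exact spread v hv hlv hv0
  obtain ⟨u, hu⟩ := exists_mk_one_mem hSH
  have hS' : 2 ≤ finrank F S' := by
    have : finrank F S ≤ finrank F S' + 1 := finrank_le_finrank_comap_inl_add_one S
    omega
  by_cases hspread : ∃ v ∈ S', l • v ∈ S' ∧ v ≠ 0
  · obtain ⟨v, hv, hlv, hv0⟩ := hspread
    exact spread v hv hlv hv0
  push Not at hspread
  obtain ⟨x, hx, v, hv, rfl⟩ := exists_add_smul_eq hl0 (S := S') (by omega) hspread u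
  rcases eq_or_ne v 0 with rfl | hv0
  · have he : ((0 : E), (1 : F)) ∈ S := by simpa using S.sub_mem hu hx
    obtain ⟨z, hzS, hzW, hz0⟩ :=
      exists_mem_inf_ne_zero_of_finrank_lt (s := S') (t := W) (by omega)
    exact ⟨_, .inr ⟨mk F ⟨z, hzW⟩ (by simpa using hz0), rfl⟩, coneLine_mk_le _ hzS he⟩
  · refine ⟨transversalLine F l v, .inl (.inr ⟨v, hv0, rfl⟩), ?_⟩
    rw [transversalLine, span_le, Set.insert_subset_iff, Set.singleton_subset_iff]
    exact ⟨hv, by simpa using S.sub_mem hu hx⟩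

theorem isLineBlocking_blockingLines (hK : finrank F K = 2) (hE : finrank K E = 2) {l : K}
    (hl : l ∉ Set.range (algebraMap F K)) {W : Submodule F E} (hW : finrank F W = 3) :
    IsLineBlocking (blockingLines l W) := by
  refine ⟨?_, fun _ ↦ exists_mem_blockingLines_le hK hE hl hW⟩
  rintro T ((⟨p, rfl⟩ | ⟨v, hv, rfl⟩) | ⟨p, rfl⟩)
  · exact (finrank_spreadLine p).trans hK
  · exact finrank_span_pair_mk_zero_mk_one hv
  · exact finrank_span_pair_mk_zero_mk_one (by simpa using p.rep_nonzero)

theorem blockingLines_finite [Finite E] (l : K) (W : Submodule F E) :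
    (blockingLines l W).Finite :=
  ((Set.finite_range _).union ((Set.toFinite _).image _)).union (Set.finite_range _)

theorem ncard_blockingLines_le [Finite F] (hK : finrank F K = 2) (hE : finrank K E = 2) (l : K)
    {W : Submodule F E} (hW : finrank F W = 3) :
    (blockingLines l W).ncard ≤ Nat.card F ^ 4 + 2 * Nat.card F ^ 2 + Nat.card F + 1 := by
  have : Module.Finite F K := Module.finite_of_finrank_pos (by omega)
  have : Module.Finite K E := Module.finite_of_finrank_pos (by omega)
  have : Finite K := Module.finite_of_finite F
  have : Finite E := Module.finite_of_finite K
  have hKcard : Nat.card K = Nat.card F ^ 2 := by rw [natCard_eq_pow_finrank (K := F), hK]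
  have hEcard : Nat.card E = Nat.card F ^ 4 := by
    rw [natCard_eq_pow_finrank (K := K), hE, hKcard, ← pow_mul]
  have hspread : (Set.range (spreadLine F (K := K) (E := E))).ncard ≤ Nat.card F ^ 2 + 1 :=
    (Set.ncard_range_le _).trans (by rw [card_of_finrank_two K E hE, hKcard])
  have htransversal : (transversalLine F l '' ({0}ᶜ : Set E)).ncard ≤ Nat.card F ^ 4 - 1 :=
    (Set.ncard_image_le (Set.toFinite _)).trans
      (by rw [Set.ncard_compl, Set.ncard_singleton, hEcard])
  have hcone : (Set.range (coneLine (W := W))).ncard ≤ Nat.card F ^ 2 + Nat.card F + 1 :=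
    (Set.ncard_range_le _).trans <| by
      rw [card_of_finrank F W hW]
      simp [Finset.sum_range_succ]
      omega
  have hq : 1 ≤ Nat.card F ^ 4 := Nat.one_le_pow _ _ Nat.card_pos
  have := Set.ncard_union_le (Set.range (spreadLine F (K := K) (E := E)))
    (transversalLine F l '' {0}ᶜ)
  refine (Set.ncard_union_le _ _).trans ?_
  omega

end EisfeldMetsch

open EisfeldMetsch

theorem stmt15 (F : Type) [Field F] [Fintype F] (q : ℕ) (hq : Fintype.card F = q) :
    fBlock F 4 ≤ q ^ 4 + 2 * q ^ 2 + q + 1 := by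
  obtain ⟨p, _⟩ := CharP.exists F
  have : Fact p.Prime := ⟨CharP.char_is_prime F p⟩
  let K := FiniteField.Extension F p 2
  have hK : finrank F K = 2 := FiniteField.finrank_extension F p 2
  have hE : finrank K (K × K) = 2 := by simp
  obtain ⟨l, hl⟩ := exists_notMem_range_algebraMap (F := F) (K := K) (by omega)
  have hE4 : finrank F (K × K) = 4 := by rw [← finrank_mul_finrank F K, hK, hE]
  obtain ⟨W, hW⟩ := exists_finrank_eq (F := F) (V := K × K) (k := 3) (by omega)
  let e : ((K × K) × F) ≃ₗ[F] (Fin (4 + 1) → F) := .ofFinrankEq _ _ (by simp [hE4])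
  calc fBlock F 4 ≤ (map (e : (K × K) × F →ₗ[F] Fin (4 + 1) → F) '' blockingLines l W).ncard :=
        fBlock_le_ncard ((blockingLines_finite l W).image _)
          ((isLineBlocking_blockingLines hK hE hl hW).image_linearEquiv e)
    _ ≤ (blockingLines l W).ncard := Set.ncard_image_le (blockingLines_finite l W)
    _ ≤ q ^ 4 + 2 * q ^ 2 + q + 1 := by simpa [hq] using ncard_blockingLines_le hK hE l hW
end

section
/- Let f*(n,q) be defined by f*(n,q) = f(n,q) for −1 ≤ n ≤ 4 (with f(−1)=f(0)=f(1)=0, f(2)=1, f(3,q)=q²+1, f(4,q)=q⁴+2q²+q+1), and recursively f*(n,q) = q^{2k+2} f*(n−k−1,q) + f*(k,q) + (∑_{i=0}^{k} q^i)(∑_{j=k}^{n−2} q^j) where k = k*(n) = n − 2^{⌊log₂ n⌋}. Then for every n ≥ 2, f*(n,q) is a polynomial in q of degree 2n−4 with leading coefficient 1. -/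
open Polynomial in
/-- The anchor polynomial sequence `f*(n, q)`, defined by the known values for
`n ≤ 4` and recursively via `k = k*(n) = n - 2 ^ ⌊log₂ n⌋` for `n ≥ 5`. -/
noncomputable def fstar : ℕ → Polynomial ℤ
  | 0 => 0
  | 1 => 0
  | 2 => 1
  | 3 => X ^ 2 + 1
  | 4 => X ^ 4 + 2 * X ^ 2 + X + 1
  | (n + 5) =>
      X ^ (2 * ((n + 5) - 2 ^ Nat.log 2 (n + 5)) + 2) *
          fstar ((n + 5) - ((n + 5) - 2 ^ Nat.log 2 (n + 5)) - 1) +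
        fstar ((n + 5) - 2 ^ Nat.log 2 (n + 5)) +
        (∑ i ∈ Finset.range ((n + 5) - 2 ^ Nat.log 2 (n + 5) + 1), X ^ i) *
          (∑ j ∈ Finset.Icc ((n + 5) - 2 ^ Nat.log 2 (n + 5)) (n + 3), X ^ j)
  decreasing_by
  all_goals
    (have h1 := Nat.pow_log_le_self 2 (show n + 5 ≠ 0 by omega)
     have h2 : 0 < 2 ^ Nat.log 2 (n + 5) := pow_pos (by norm_num) _
     omega)

open Polynomial in
lemma sum_pow_degree_le (s : Finset ℕ) (m : ℕ) (h : ∀ i ∈ s, i ≤ m) :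
    (∑ i ∈ s, (X : ℤ[X]) ^ i).degree ≤ (m : ℕ) := by
  refine (degree_sum_le _ _).trans ?_
  refine Finset.sup_le fun i hi => ?_
  rw [degree_X_pow]
  exact_mod_cast h i hi

open Polynomial in
theorem stmt16 (n : ℕ) (hn : 2 ≤ n) :
    (fstar n).Monic ∧ (fstar n).natDegree = 2 * n - 4 := by
  induction n using Nat.strong_induction_on with
  | _ n ih =>
  match n, hn with
  | 2, _ =>
      have h : fstar 2 = 1 := by simp [fstar]
      exact ⟨h ▸ monic_one, by simp [h]⟩
  | 3, _ =>
      have h : fstar 3 = X ^ 2 + 1 := by simp [fstar]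
      rw [h]
      refine ⟨?_, ?_⟩
      · monicity!
      · compute_degree!
  | 4, _ =>
      have h : fstar 4 = X ^ 4 + 2 * X ^ 2 + X + 1 := by simp [fstar]
      rw [h]
      refine ⟨?_, ?_⟩
      · monicity!
      · compute_degree!
  | (m + 5), _ =>
      set p : ℕ := 2 ^ Nat.log 2 (m + 5) with hp
      have hple : p ≤ m + 5 := Nat.pow_log_le_self 2 (by omega)
      have hplt : m + 5 < 2 * p := by
        have := Nat.lt_pow_succ_log_self (by norm_num : 1 < 2) (m + 5)
        simpa [pow_succ, mul_comm] using this
      have hp4 : 4 ≤ p := by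
        have : 2 ≤ Nat.log 2 (m + 5) := Nat.le_log_of_pow_le (by norm_num) (by omega)
        calc (4 : ℕ) = 2 ^ 2 := by norm_num
        _ ≤ p := Nat.pow_le_pow_right (by norm_num) this
      set k : ℕ := m + 5 - p with hk
      have hk2 : 2 * k < m + 5 := by omega
      have hkm : k < m + 3 := by omega
      have hrw : m + 5 - (m + 5 - p) - 1 = p - 1 := by omega
      -- IH for p - 1
      obtain ⟨hM1, hD1⟩ := ih (p - 1) (by omega) (by omega)
      have hfeq : fstar (m + 5) =
          X ^ (2 * k + 2) * fstar (p - 1) + fstar k +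
          (∑ i ∈ Finset.range (k + 1), X ^ i) *
            (∑ j ∈ Finset.Icc k (m + 3), X ^ j) := by
        rw [fstar]
        rw [hrw]
      -- the leading term
      have hT1M : (X ^ (2 * k + 2) * fstar (p - 1)).Monic :=
        (monic_X_pow _).mul hM1
      have hT1D : (X ^ (2 * k + 2) * fstar (p - 1)).natDegree = 2 * (m + 5) - 4 := by
        rw [(monic_X_pow _).natDegree_mul hM1, natDegree_X_pow, hD1]
        omega
      have hT1deg : (X ^ (2 * k + 2) * fstar (p - 1)).degree = ((2 * (m + 5) - 4 : ℕ) : WithBot ℕ) := by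
        rw [degree_eq_natDegree hT1M.ne_zero, hT1D]
      -- degree bound on fstar k
      have hfk : (fstar k).degree < ((2 * (m + 5) - 4 : ℕ) : WithBot ℕ) := by
        rcases Nat.lt_or_ge k 2 with h | h
        · interval_cases k <;> simp [fstar]
          all_goals exact_mod_cast WithBot.bot_lt_coe _
        · obtain ⟨hMk, hDk⟩ := ih k (by omega) h
          rw [degree_eq_natDegree hMk.ne_zero, hDk]
          exact_mod_cast (by omega : 2 * k - 4 < 2 * (m + 5) - 4)
      -- degree bound on the product of sums
      have hprod : ((∑ i ∈ Finset.range (k + 1), (X : ℤ[X]) ^ i) *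
            (∑ j ∈ Finset.Icc k (m + 3), X ^ j)).degree <
          ((2 * (m + 5) - 4 : ℕ) : WithBot ℕ) := by
        refine lt_of_le_of_lt (degree_mul_le _ _) ?_
        have h1 : (∑ i ∈ Finset.range (k + 1), (X : ℤ[X]) ^ i).degree ≤ (k : ℕ) :=
          sum_pow_degree_le _ _ fun i hi => by
            simpa using Nat.lt_succ_iff.mp (Finset.mem_range.mp hi)
        have h2 : (∑ j ∈ Finset.Icc k (m + 3), (X : ℤ[X]) ^ j).degree ≤ ((m + 3 : ℕ) : WithBot ℕ) :=
          sum_pow_degree_le _ _ fun j hj => (Finset.mem_Icc.mp hj).2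
        calc (∑ i ∈ Finset.range (k + 1), (X : ℤ[X]) ^ i).degree +
              (∑ j ∈ Finset.Icc k (m + 3), (X : ℤ[X]) ^ j).degree
            ≤ ((k : ℕ) : WithBot ℕ) + ((m + 3 : ℕ) : WithBot ℕ) := add_le_add h1 h2
          _ = ((k + (m + 3) : ℕ) : WithBot ℕ) := by
              rw [← Nat.cast_add]
          _ < ((2 * (m + 5) - 4 : ℕ) : WithBot ℕ) := by
              exact_mod_cast (by omega : k + (m + 3) < 2 * (m + 5) - 4)
      -- combine
      have hB : (fstar k + (∑ i ∈ Finset.range (k + 1), (X : ℤ[X]) ^ i) *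
            (∑ j ∈ Finset.Icc k (m + 3), X ^ j)).degree <
          (X ^ (2 * k + 2) * fstar (p - 1)).degree := by
        rw [hT1deg]
        exact lt_of_le_of_lt (degree_add_le _ _) (max_lt hfk hprod)
      rw [hfeq, add_assoc]
      constructor
      · exact hT1M.add_of_left hB
      · rw [natDegree_add_eq_left_of_degree_lt hB, hT1D]
end

section
/- With f*(n,q) as the anchor polynomial sequence defined recursively via k*(n) (the unique 0 ≤ k ≤ (n−1)/2 with n−k a power of 2), for any 3 ≤ n < n', the leading term of f*(n+1,q) − q²·f*(n,q) is q^{n−1}; in particular f*(n,q) is lexicographically smaller than f*(n',q) as polynomials in q, with the first difference in the coefficient of n-th highest order, differing by exactly 1. -/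
open Polynomial

lemma IccMul (a b : ℕ) (h : a ≤ b + 1) :
    (∑ j ∈ Finset.Icc a b, (X:ℤ[X])^j) * (X - 1) = X^(b+1) - X^a := by
  have h1 : ∑ j ∈ Finset.Icc a b, (X:ℤ[X])^j
      = X^a * ∑ i ∈ Finset.range (b+1-a), X^i := by
    rw [← Finset.Ico_add_one_right_eq_Icc, Finset.sum_Ico_eq_sum_range, Finset.mul_sum]
    exact Finset.sum_congr rfl fun i _ => by rw [← pow_add]
  rw [h1, mul_assoc, geom_sum_mul, mul_sub, ← pow_add, mul_one,
    show a + (b+1-a) = b+1 by omega]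

lemma keyId (k b : ℕ) (h : k + 1 ≤ b) :
    (∑ i ∈ Finset.range (k+2), (X:ℤ[X])^i) * (∑ j ∈ Finset.Icc (k+1) b, X^j)
      - X^2 * ((∑ i ∈ Finset.range (k+1), X^i) * (∑ j ∈ Finset.Icc k (b-1), X^j))
      = ∑ j ∈ Finset.Icc (k+1) b, X^j := by
  have hX : ((X:ℤ[X]) - 1) ≠ 0 := by
    intro hc
    have := congrArg (fun p => Polynomial.coeff p 1) hc
    simp [Polynomial.coeff_one] at this
  apply mul_right_cancel₀ (mul_ne_zero hX hX)
  have h1 := geom_sum_mul (X:ℤ[X]) (k+2)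
  have h2 := IccMul (k+1) b (by omega)
  have h3 := geom_sum_mul (X:ℤ[X]) (k+1)
  have h4 := IccMul k (b-1) (by omega)
  rw [show b - 1 + 1 = b by omega] at h4
  linear_combination ((∑ j ∈ Finset.Icc (k+1) b, (X:ℤ[X])^j) * (X-1)) * h1
    + ((X:ℤ[X])^(k+2) - 1 - (X - 1)) * h2
    - (X^2 * (∑ j ∈ Finset.Icc k (b-1), (X:ℤ[X])^j) * (X-1)) * h3
    - (X^2 * ((X:ℤ[X])^(k+1) - 1)) * h4

lemma coeffIcc (a b d : ℕ) :
    (∑ j ∈ Finset.Icc a b, (X:ℤ[X])^j).coeff d = if a ≤ d ∧ d ≤ b then 1 else 0 := by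
  rw [Polynomial.finset_sum_coeff]
  simp only [Polynomial.coeff_X_pow]
  rw [Finset.sum_ite_eq (Finset.Icc a b) d (fun _ => (1:ℤ))]
  simp [Finset.mem_Icc]

lemma natDegreeIcc (a b : ℕ) :
    (∑ j ∈ Finset.Icc a b, (X:ℤ[X])^j).natDegree ≤ b := by
  rw [Polynomial.natDegree_le_iff_coeff_eq_zero]
  intro m hm
  rw [coeffIcc]
  simp only [ite_eq_right_iff]
  omega

lemma fstar_eq (n : ℕ) (h : 5 ≤ n) :
    fstar n = X ^ (2 * (n - 2 ^ Nat.log 2 n) + 2) * fstar (n - (n - 2 ^ Nat.log 2 n) - 1) +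
      fstar (n - 2 ^ Nat.log 2 n) +
      (∑ i ∈ Finset.range ((n - 2 ^ Nat.log 2 n) + 1), X ^ i) *
        (∑ j ∈ Finset.Icc (n - 2 ^ Nat.log 2 n) (n - 2), X ^ j) := by
  obtain ⟨m, rfl⟩ : ∃ m, n = m + 5 := ⟨n - 5, by omega⟩
  rw [show m + 5 - 2 = m + 3 from rfl]
  exact fstar.eq_6 m

lemma logfacts (n : ℕ) (h : 1 ≤ n) :
    2 ^ Nat.log 2 n ≤ n ∧ n < 2 * 2 ^ Nat.log 2 n := by
  refine ⟨Nat.pow_log_le_self 2 (by omega), ?_⟩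
  have := Nat.lt_pow_succ_log_self (by norm_num : 1 < 2) n
  rwa [pow_succ, mul_comm] at this

lemma gcaseA (n : ℕ) (h5 : 5 ≤ n) (hp : 2 ^ Nat.log 2 (n+1) = n+1) :
    fstar (n+1) - X^2 * fstar n = ∑ j ∈ Finset.Icc 0 (n-1), X^j := by
  rw [fstar_eq (n+1) (by omega)]
  rw [show n + 1 - 2 ^ Nat.log 2 (n+1) = 0 by omega]
  rw [show n + 1 - 0 - 1 = n by omega, show n + 1 - 2 = n - 1 by omega]
  rw [fstar.eq_1]
  rw [Finset.sum_range_one, pow_zero]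
  ring

lemma gcaseB (n k : ℕ) (h5 : 5 ≤ n) (hk : k = n - 2 ^ Nat.log 2 n)
    (hp : 2 ^ Nat.log 2 (n+1) ≠ n+1) :
    fstar (n+1) - X^2 * fstar n
      = (fstar (k+1) - X^2 * fstar k) + ∑ j ∈ Finset.Icc (k+1) (n-1), X^j := by
  obtain ⟨ha, hb⟩ := logfacts (n+1) (by omega)
  have hlog : Nat.log 2 n = Nat.log 2 (n+1) := by
    refine Nat.log_eq_of_pow_le_of_lt_pow (by omega) ?_
    rw [pow_succ]; omega
  rw [hlog] at hk
  have hkb : 2 * k < n := by omega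
  have hk1 : n + 1 - 2 ^ Nat.log 2 (n+1) = k + 1 := by omega
  rw [fstar_eq (n+1) (by omega), fstar_eq n h5, hlog, hk1, ← hk]
  rw [show n + 1 - (k+1) - 1 = n - k - 1 by omega,
      show n + 1 - 2 = n - 1 by omega,
      show 2 * (k+1) + 2 = 2*k + 4 by omega,
      show k + 1 + 1 = k + 2 by omega]
  have hpow : (X:ℤ[X])^(2*k+4) = X^2 * X^(2*k+2) := by
    rw [show 2*k+4 = 2+(2*k+2) by omega, pow_add]
  have key := keyId k (n-1) (by omega)
  rw [show n - 1 - 1 = n - 2 by omega] at key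
  linear_combination (fstar (n-k-1)) * hpow + key

lemma gmain : ∀ n : ℕ, (fstar (n+1) - X^2 * fstar n).natDegree ≤ n ∧
    (3 ≤ n → (fstar (n+1) - X^2 * fstar n).natDegree = n-1 ∧
      (fstar (n+1) - X^2 * fstar n).coeff (n-1) = 1) := by
  intro n
  induction n using Nat.strong_induction_on with
  | _ n ih =>
  match n with
  | 0 =>
      rw [fstar.eq_2, fstar.eq_1]
      simp
  | 1 =>
      rw [fstar.eq_3, fstar.eq_2]
      simp
  | 2 =>
      rw [fstar.eq_4, fstar.eq_3]
      refine ⟨?_, by omega⟩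
      have : (X:ℤ[X])^2 + 1 - X^2 * 1 = 1 := by ring
      rw [this]
      simp
  | 3 =>
      have h : fstar 4 - X^2 * fstar 3 = X^2 + X + 1 := by
        rw [fstar.eq_5, fstar.eq_4]; ring
      rw [h]
      refine ⟨?_, fun _ => ⟨?_, ?_⟩⟩
      · compute_degree!
      · compute_degree!
      · simp [Polynomial.coeff_one, Polynomial.coeff_X]
  | 4 =>
      have hlog : Nat.log 2 5 = 2 := Nat.log_eq_of_pow_le_of_lt_pow (by norm_num) (by norm_num)
      have hr2 : (∑ i ∈ Finset.range 2, (X:ℤ[X])^i) = 1 + X := by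
        rw [Finset.sum_range_succ, Finset.sum_range_one, pow_zero, pow_one]
      have hIcc : (∑ j ∈ Finset.Icc 1 3, (X:ℤ[X])^j) = X + X^2 + X^3 := by
        rw [show Finset.Icc 1 3 = {1, 2, 3} by decide]
        rw [Finset.sum_insert (by decide), Finset.sum_insert (by decide),
          Finset.sum_singleton]
        ring
      have h5 : fstar 5 = X^4 * fstar 3 + fstar 1 + (1 + X) * (X + X^2 + X^3) := by
        rw [fstar_eq 5 (le_refl 5), hlog]
        norm_num [hr2, hIcc]
      have h : fstar (4+1) - X^2 * fstar 4 = X^3 + X^2 + X := by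
        rw [h5, fstar.eq_5, fstar.eq_4, fstar.eq_2]; ring
      rw [h]
      refine ⟨?_, fun _ => ⟨?_, ?_⟩⟩
      · compute_degree!
      · compute_degree!
      · simp [Polynomial.coeff_one, Polynomial.coeff_X]
  | (n + 5) =>
      set k := (n + 5) - 2 ^ Nat.log 2 (n + 5) with hkdef
      obtain ⟨ha, hb⟩ := logfacts (n+5) (by omega)
      have hkb : 2 * k < n + 5 := by omega
      by_cases hp : 2 ^ Nat.log 2 (n+5+1) = n+5+1
      · rw [gcaseA (n+5) (by omega) hp]
        have hco : (∑ j ∈ Finset.Icc 0 (n+5-1), (X:ℤ[X])^j).coeff (n+5-1) = 1 := by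
          rw [coeffIcc]
          simp
        refine ⟨le_trans (natDegreeIcc 0 (n+5-1)) (by omega), fun _ => ⟨?_, hco⟩⟩
        refine le_antisymm (natDegreeIcc 0 (n+5-1)) ?_
        exact le_natDegree_of_ne_zero (by rw [hco]; exact one_ne_zero)
      · rw [gcaseB (n+5) k (by omega) hkdef hp]
        obtain ⟨ihk, -⟩ := ih k (by omega)
        have hc0 : (fstar (k+1) - X^2 * fstar k).coeff (n+5-1) = 0 :=
          Polynomial.coeff_eq_zero_of_natDegree_lt (lt_of_le_of_lt ihk (by omega))
        have hcs : (∑ j ∈ Finset.Icc (k+1) (n+5-1), (X:ℤ[X])^j).coeff (n+5-1) = 1 := by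
          rw [coeffIcc]
          rw [if_pos ⟨by omega, le_refl _⟩]
        have hco : ((fstar (k+1) - X^2 * fstar k) +
            ∑ j ∈ Finset.Icc (k+1) (n+5-1), (X:ℤ[X])^j).coeff (n+5-1) = 1 := by
          rw [Polynomial.coeff_add, hc0, hcs, zero_add]
        have hdle : ((fstar (k+1) - X^2 * fstar k) +
            ∑ j ∈ Finset.Icc (k+1) (n+5-1), (X:ℤ[X])^j).natDegree ≤ n+5-1 := by
          refine le_trans (Polynomial.natDegree_add_le _ _) ?_
          refine max_le (le_trans ihk (by omega)) (natDegreeIcc _ _)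
        refine ⟨le_trans hdle (by omega), fun _ => ⟨?_, hco⟩⟩
        exact le_antisymm hdle (le_natDegree_of_ne_zero (by rw [hco]; exact one_ne_zero))

lemma stepTransfer (m : ℕ) (hm : 3 ≤ m) :
    (∀ i, i < m - 1 → (fstar (m+1)).coeff (2*(m+1)-4-i) = (fstar m).coeff (2*m-4-i)) ∧
    (fstar (m+1)).coeff (2*(m+1)-4-(m-1)) = (fstar m).coeff (2*m-4-(m-1)) + 1 := by
  obtain ⟨hd, hc⟩ := (gmain m).2 hm
  have he : fstar (m+1) = X^2 * fstar m + (fstar (m+1) - X^2 * fstar m) := by ring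
  constructor
  · intro i hi
    have hz : (fstar (m+1) - X^2 * fstar m).coeff ((2*m-4-i) + 2) = 0 := by
      apply Polynomial.coeff_eq_zero_of_natDegree_lt
      rw [hd]; omega
    calc (fstar (m+1)).coeff (2*(m+1)-4-i)
        = (X^2 * fstar m + (fstar (m+1) - X^2 * fstar m)).coeff ((2*m-4-i)+2) := by
          rw [← he, show 2*(m+1)-4-i = (2*m-4-i)+2 by omega]
      _ = (fstar m).coeff (2*m-4-i) := by
          rw [Polynomial.coeff_add, Polynomial.coeff_X_pow_mul, hz, add_zero]
  · calc (fstar (m+1)).coeff (2*(m+1)-4-(m-1))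
        = (X^2 * fstar m + (fstar (m+1) - X^2 * fstar m)).coeff ((2*m-4-(m-1))+2) := by
          rw [← he, show 2*(m+1)-4-(m-1) = (2*m-4-(m-1))+2 by omega]
      _ = (fstar m).coeff (2*m-4-(m-1))
            + (fstar (m+1) - X^2 * fstar m).coeff ((2*m-4-(m-1))+2) := by
          rw [Polynomial.coeff_add, Polynomial.coeff_X_pow_mul]
      _ = (fstar m).coeff (2*m-4-(m-1)) + 1 := by
          rw [show (2*m-4-(m-1))+2 = m-1 by omega, hc]

theorem stmt17 (n n' : ℕ) (hn : 3 ≤ n) (hnn' : n < n') :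
    ((fstar (n + 1) - Polynomial.X ^ 2 * fstar n).natDegree = n - 1 ∧
      (fstar (n + 1) - Polynomial.X ^ 2 * fstar n).leadingCoeff = 1) ∧
    (∀ i < n - 1,
      (fstar n').coeff (2 * n' - 4 - i) = (fstar n).coeff (2 * n - 4 - i)) ∧
    (fstar n').coeff (2 * n' - 4 - (n - 1)) =
      (fstar n).coeff (2 * n - 4 - (n - 1)) + 1 := by
  obtain ⟨hd, hc⟩ := (gmain n).2 hn
  have hl : (fstar (n+1) - X^2 * fstar n).leadingCoeff = 1 := by
    rw [Polynomial.leadingCoeff, hd, hc]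
  refine ⟨⟨hd, hl⟩, ?_⟩
  have key : ∀ N, n + 1 ≤ N →
      ((∀ i < n-1, (fstar N).coeff (2*N-4-i) = (fstar n).coeff (2*n-4-i)) ∧
       (fstar N).coeff (2*N-4-(n-1)) = (fstar n).coeff (2*n-4-(n-1)) + 1) := by
    intro N hN
    induction N, hN using Nat.le_induction with
    | base =>
        obtain ⟨s1, s2⟩ := stepTransfer n hn
        exact ⟨fun i hi => s1 i hi, s2⟩
    | succ N hN ihN =>
        obtain ⟨s1, s2⟩ := stepTransfer N (by omega)
        obtain ⟨t1, t2⟩ := ihN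
        constructor
        · intro i hi
          rw [s1 i (by omega), t1 i hi]
        · rw [s1 (n-1) (by omega), t2]
  exact key n' (by omega)
end
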